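/- arXiv:1512.07134 — 5 statements merged into one kernel-verified Lean document; each statement's English description precedes it below -/
import Mathlib

section
/- For real numbers c > 0 and y > 1, the Perron integral (1/(2πi)) ∫_{c-i∞}^{c+i∞} y^s ds/s equals 1. -/
/-!
Write `y = e^a` with `a = log y > 0` and `s = c + it`. Since `d(y^s/s)/dt = i·a·y^s/s - i·y^s/s²`,
integration by parts trades `∫ y^s/s` for the boundary term `[y^s/(a s)]`, which is `O(e^{ac}/T)`,
plus `(1/a)∫ y^s/s²`. The latter integral converges absolutely and is evaluated by Fourier
inversion: `x ↦ x₊ e^{-cx}` has Fourier transform `(c + 2πiξ)⁻²`, so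
`∫ e^{a(c+it)}/(c+it)² dt = 2π a₊`.
-/

open Complex Filter MeasureTheory Set Topology
open scoped Real FourierTransform

section LaplaceIntegral

variable {z : ℂ}

lemma integrableOn_ofReal_mul_cexp_neg_mul_Ioi (hz : 0 < z.re) :
    IntegrableOn (fun x : ℝ => (x : ℂ) * cexp (-(z * x))) (Ioi 0) := by
  refine Integrable.mono' (integrableOn_rpow_mul_exp_neg_mul_rpow (s := 1) (p := 1)
    (by norm_num) one_pos hz) (by fun_prop) ?_
  filter_upwards [ae_restrict_mem measurableSet_Ioi] with x hx
  simp [Complex.norm_exp, abs_of_pos (mem_Ioi.mp hx)]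

lemma tendsto_cexp_neg_mul_atTop (hz : 0 < z.re) :
    Tendsto (fun x : ℝ => cexp (-(z * x))) atTop (𝓝 0) := by
  rw [Complex.tendsto_exp_nhds_zero_iff]
  simpa using tendsto_id.const_mul_atTop hz

lemma tendsto_ofReal_mul_cexp_neg_mul_atTop (hz : 0 < z.re) :
    Tendsto (fun x : ℝ => (x : ℂ) * cexp (-(z * x))) atTop (𝓝 0) := by
  rw [tendsto_zero_iff_norm_tendsto_zero]
  refine (tendsto_rpow_mul_exp_neg_mul_atTop_nhds_zero 1 _ hz).congr' ?_
  filter_upwards [eventually_ge_atTop 0] with x hx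
  simp [Complex.norm_exp, abs_of_nonneg hx]

lemma integral_ofReal_mul_cexp_neg_mul_Ioi (hz : 0 < z.re) :
    ∫ x : ℝ in Ioi 0, (x : ℂ) * cexp (-(z * x)) = (z ^ 2)⁻¹ := by
  have hz0 : z ≠ 0 := by rintro rfl; simp at hz
  let F : ℝ → ℂ := fun x => -(z⁻¹ * (x * cexp (-(z * x))) + (z ^ 2)⁻¹ * cexp (-(z * x)))
  have hF : ∀ x : ℝ, HasDerivAt F ((x : ℂ) * cexp (-(z * x))) x := by
    intro x
    have hexp : HasDerivAt (fun x : ℝ => cexp (-(z * x))) (-z * cexp (-(z * x))) x := by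
      simpa [mul_comm] using ((ofRealCLM.hasDerivAt (x := x)).const_mul z).neg.cexp
    refine (((((hasDerivAt_id x).ofReal_comp).fun_mul hexp).const_mul z⁻¹).fun_add
      (hexp.const_mul (z ^ 2)⁻¹)).fun_neg.congr_deriv ?_
    simp only [id, ofReal_one]
    field_simp
    ring
  have hlim : Tendsto F atTop (𝓝 0) := by
    simpa only [mul_zero, add_zero, neg_zero] using
      (((tendsto_ofReal_mul_cexp_neg_mul_atTop hz).const_mul z⁻¹).add
        ((tendsto_cexp_neg_mul_atTop hz).const_mul (z ^ 2)⁻¹)).neg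
  rw [integral_Ioi_of_hasDerivAt_of_tendsto (hF 0).continuousAt.continuousWithinAt
    (fun x _ => hF x) (integrableOn_ofReal_mul_cexp_neg_mul_Ioi hz) hlim]
  simp [F]

end LaplaceIntegral

section FourierTransform

variable {c : ℝ}

noncomputable def posPartMulExp (c x : ℝ) : ℂ := (max x 0 : ℝ) * cexp (-(c * x))

lemma continuous_posPartMulExp (c : ℝ) : Continuous (posPartMulExp c) := by
  unfold posPartMulExp
  fun_prop

lemma posPartMulExp_eq_indicator (c : ℝ) :
    posPartMulExp c = (Ioi 0).indicator fun x : ℝ => (x : ℂ) * cexp (-(c * x)) := by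
  ext x
  rcases le_or_gt x 0 with hx | hx
  · simp [posPartMulExp, hx]
  · simp [posPartMulExp, hx, hx.le]

lemma posPartMulExp_of_nonneg {x : ℝ} (hx : 0 ≤ x) :
    posPartMulExp c x = x * Real.exp (-(c * x)) := by
  simp [posPartMulExp, hx]

lemma integrable_posPartMulExp (hc : 0 < c) : Integrable (posPartMulExp c) := by
  rw [posPartMulExp_eq_indicator, integrable_indicator_iff measurableSet_Ioi]
  exact integrableOn_ofReal_mul_cexp_neg_mul_Ioi (by simpa using hc)

lemma fourier_posPartMulExp (hc : 0 < c) (ξ : ℝ) :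
    𝓕 (posPartMulExp c) ξ = (((c : ℂ) + 2 * π * ξ * I) ^ 2)⁻¹ := by
  rw [Real.fourier_real_eq_integral_exp_smul, posPartMulExp_eq_indicator]
  simp_rw [← indicator_smul_apply (Ioi 0) (fun v : ℝ => cexp (↑(-2 * π * v * ξ) * I))]
  rw [integral_indicator measurableSet_Ioi,
    ← integral_ofReal_mul_cexp_neg_mul_Ioi (z := c + 2 * π * ξ * I) (by simpa using hc)]
  refine setIntegral_congr_fun measurableSet_Ioi fun x _ => ?_
  rw [smul_eq_mul, mul_left_comm, ← Complex.exp_add]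
  push_cast
  ring_nf

lemma norm_inv_ofReal_add_mul_I_sq (c t : ℝ) :
    ‖(((c : ℂ) + t * I) ^ 2)⁻¹‖ = (c ^ 2 + t ^ 2)⁻¹ := by
  rw [norm_inv, norm_pow, norm_add_mul_I, Real.sq_sqrt (by positivity)]

lemma integrable_inv_ofReal_add_mul_I_sq (hc : c ≠ 0) :
    Integrable fun t : ℝ => (((c : ℂ) + t * I) ^ 2)⁻¹ := by
  have hbound : Integrable fun t : ℝ => (c ^ 2 + t ^ 2)⁻¹ := by
    refine ((integrable_inv_one_add_sq.comp_div hc).const_mul (c ^ 2)⁻¹).congr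
      (Eventually.of_forall fun t => ?_)
    field_simp
  refine hbound.mono' (by fun_prop) (Eventually.of_forall fun t => ?_)
  rw [norm_inv_ofReal_add_mul_I_sq]

lemma integrable_fourier_posPartMulExp (hc : 0 < c) : Integrable (𝓕 (posPartMulExp c)) := by
  have h := (integrable_inv_ofReal_add_mul_I_sq hc.ne').comp_mul_left' (R := 2 * π)
    (by positivity)
  refine h.congr (Eventually.of_forall fun ξ => ?_)
  simp [fourier_posPartMulExp hc, mul_assoc]

end FourierTransform

section FourierInversion

variable {c : ℝ}

lemma integral_cexp_mul_I_mul_inv_sq (hc : 0 < c) (a : ℝ) :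
    ∫ t : ℝ, cexp (a * t * I) * (((c : ℂ) + t * I) ^ 2)⁻¹ = 2 * π * posPartMulExp c a := by
  let G : ℝ → ℂ := fun t => cexp (a * t * I) * (((c : ℂ) + t * I) ^ 2)⁻¹
  have hinv := congrFun ((continuous_posPartMulExp c).fourierInv_fourier_eq
    (integrable_posPartMulExp hc) (integrable_fourier_posPartMulExp hc)) a
  have hG : (fun ξ : ℝ => cexp (↑(2 * π * inner ℝ ξ a) * I) • 𝓕 (posPartMulExp c) ξ) =
      fun ξ => G (2 * π * ξ) := by
    ext ξ
    simp only [G, fourier_posPartMulExp hc, smul_eq_mul, Real.inner_apply]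
    push_cast
    ring_nf
  rw [Real.fourierInv_eq', hG, Measure.integral_comp_mul_left G (2 * π),
    abs_of_pos (by positivity), Complex.real_smul] at hinv
  have h2π : (2 * π : ℂ) * ↑(2 * π)⁻¹ = 1 := by
    push_cast
    exact mul_inv_cancel₀ (by simp [Real.pi_ne_zero])
  rw [← hinv, ← mul_assoc, h2π, one_mul]

lemma integrable_cexp_mul_div_sq (hc : c ≠ 0) (a : ℝ) :
    Integrable fun t : ℝ => cexp (a * (c + t * I)) / ((c : ℂ) + t * I) ^ 2 := by
  simp_rw [div_eq_mul_inv]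
  refine (integrable_inv_ofReal_add_mul_I_sq hc).bdd_mul (c := Real.exp (a * c)) (by fun_prop)
    (Eventually.of_forall fun t => ?_)
  simp [Complex.norm_exp]

lemma integral_cexp_mul_div_sq (hc : 0 < c) (a : ℝ) :
    ∫ t : ℝ, cexp (a * (c + t * I)) / ((c : ℂ) + t * I) ^ 2 = 2 * π * max a 0 := by
  have hsplit : ∀ t : ℝ, cexp (a * (c + t * I)) / ((c : ℂ) + t * I) ^ 2 =
      cexp (a * c) * (cexp (a * t * I) * (((c : ℂ) + t * I) ^ 2)⁻¹) := by
    intro t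
    rw [div_eq_mul_inv, ← mul_assoc, ← Complex.exp_add]
    ring_nf
  simp_rw [hsplit]
  rw [integral_const_mul, integral_cexp_mul_I_mul_inv_sq hc]
  rcases le_or_gt a 0 with ha | ha
  · simp [posPartMulExp, ha]
  · rw [posPartMulExp_of_nonneg ha.le, max_eq_left ha.le]
    push_cast
    have hexp : cexp (a * c) * cexp (-(c * a)) = 1 := by
      rw [← Complex.exp_add, mul_comm, add_neg_cancel, Complex.exp_zero]
    linear_combination (2 * π * a : ℂ) * hexp

end FourierInversion

section IntegrationByParts

variable {c : ℝ}

lemma ofReal_add_mul_I_ne_zero (hc : c ≠ 0) (t : ℝ) : (c : ℂ) + t * I ≠ 0 := by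
  intro h
  simpa [hc] using congrArg re h

lemma hasDerivAt_cexp_mul_div (hc : c ≠ 0) (a t : ℝ) :
    HasDerivAt (fun t : ℝ => cexp (a * (c + t * I)) / (c + t * I))
      (a * (cexp (a * (c + t * I)) / (c + t * I) * I) -
        I * (cexp (a * (c + t * I)) / ((c : ℂ) + t * I) ^ 2)) t := by
  have hline : HasDerivAt (fun t : ℝ => (c : ℂ) + t * I) I t := by
    simpa using ((hasDerivAt_id t).ofReal_comp.mul_const I).const_add (c : ℂ)
  have hs := ofReal_add_mul_I_ne_zero hc t
  refine ((hline.const_mul (a : ℂ)).cexp.fun_div hline hs).congr_deriv ?_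
  field_simp

lemma intervalIntegral_cexp_mul_div_mul_I (hc : c ≠ 0) {a : ℝ} (ha : a ≠ 0) (u v : ℝ) :
    ∫ t in u..v, cexp (a * (c + t * I)) / (c + t * I) * I =
      (cexp (a * (c + v * I)) / (c + v * I) - cexp (a * (c + u * I)) / (c + u * I)) / a +
        I / a * ∫ t in u..v, cexp (a * (c + t * I)) / ((c : ℂ) + t * I) ^ 2 := by
  have hs := ofReal_add_mul_I_ne_zero hc
  have hint₁ : IntervalIntegrable (fun t : ℝ => cexp (a * (c + t * I)) / (c + t * I) * I)
      volume u v :=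
    Continuous.intervalIntegrable (by fun_prop (disch := exact hs _)) _ _
  have hint₂ : IntervalIntegrable (fun t : ℝ => cexp (a * (c + t * I)) / ((c : ℂ) + t * I) ^ 2)
      volume u v :=
    (integrable_cexp_mul_div_sq hc a).intervalIntegrable
  have hftc := intervalIntegral.integral_eq_sub_of_hasDerivAt
    (fun t _ => hasDerivAt_cexp_mul_div hc a t) ((hint₁.const_mul _).sub (hint₂.const_mul _))
  rw [intervalIntegral.integral_sub (hint₁.const_mul _) (hint₂.const_mul _),
    intervalIntegral.integral_const_mul, intervalIntegral.integral_const_mul] at hftc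
  rw [← hftc, sub_div, mul_div_cancel_left₀ _ (ofReal_ne_zero.mpr ha)]
  ring

lemma tendsto_cexp_mul_div_cocompact (a c : ℝ) :
    Tendsto (fun t : ℝ => cexp (a * (c + t * I)) / (c + t * I)) (cocompact ℝ) (𝓝 0) := by
  rw [tendsto_zero_iff_norm_tendsto_zero]
  have hnorm : Tendsto (fun t : ℝ => ‖(c : ℂ) + t * I‖) (cocompact ℝ) atTop :=
    tendsto_atTop_mono (fun t => by simpa using abs_im_le_norm ((c : ℂ) + t * I))
      tendsto_norm_cocompact_atTop
  simpa [norm_div, Complex.norm_exp, div_eq_mul_inv] using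
    hnorm.inv_tendsto_atTop.const_mul (Real.exp (a * c))

end IntegrationByParts

/-- For real `c > 0` and `y > 1`, the Perron integral
`(1/(2πi)) ∫_{c-i∞}^{c+i∞} y^s ds/s`, interpreted as the symmetric limit of
integrals from `c - iT` to `c + iT`, equals `1`. -/
theorem perron_formula_of_one_lt (c y : ℝ) (hc : 0 < c) (hy : 1 < y) :
    Tendsto (fun T : ℝ =>
      (1 / (2 * Real.pi * I)) *
        ∫ t in (-T)..T, (y : ℂ) ^ ((c : ℂ) + t * I) / ((c : ℂ) + t * I) * I)
      atTop (nhds 1) := by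
  have hy0 : 0 < y := zero_lt_one.trans hy
  set a := Real.log y
  have ha : 0 < a := Real.log_pos hy
  have hpow : ∀ s : ℂ, (y : ℂ) ^ s = cexp (a * s) := fun s => by
    rw [Complex.cpow_def_of_ne_zero (ofReal_ne_zero.mpr hy0.ne'), Complex.ofReal_log hy0.le]
  have hboundary : Tendsto (fun T : ℝ => cexp (a * (c + T * I)) / (c + T * I) -
      cexp (a * (c + ↑(-T) * I)) / (c + ↑(-T) * I)) atTop (𝓝 0) := by
    have h := tendsto_cexp_mul_div_cocompact a c
    simpa only [sub_zero, Function.comp_def] using (h.mono_left atTop_le_cocompact).sub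
      ((h.mono_left atBot_le_cocompact).comp tendsto_neg_atTop_atBot)
  have hbulk := intervalIntegral_tendsto_integral (integrable_cexp_mul_div_sq hc.ne' a)
    tendsto_neg_atTop_atBot tendsto_id
  rw [integral_cexp_mul_div_sq hc, max_eq_left ha.le] at hbulk
  have hlim := ((hboundary.div_const (a : ℂ)).add (hbulk.const_mul (I / a))).const_mul
    (1 / (2 * π * I))
  have hone : 1 / (2 * π * I) * (0 / a + I / a * (2 * π * a)) = (1 : ℂ) := by
    have ha' : (a : ℂ) ≠ 0 := ofReal_ne_zero.mpr ha.ne'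
    rw [zero_div, zero_add]
    field_simp
  rw [hone] at hlim
  refine hlim.congr fun T => ?_
  simp_rw [hpow, intervalIntegral_cexp_mul_div_mul_I hc.ne' ha.ne', id]
end

section
/- For real numbers c > 0 and 0 < y < 1, the Perron integral (1/(2πi)) ∫_{c-i∞}^{c+i∞} y^s ds/s equals 0. -/
/-!
Shift the segment `[c - iT, c + iT]` to the right: by Cauchy's theorem for the rectangle with
corners `c - iT` and `R + iT` (the integrand `y^s / s` is holomorphic for `Re s > 0`), the
vertical integral equals the two horizontal ones plus the vertical integral at `Re s = R`.
Because `y < 1`, `|y^s| = y^{Re s}` decays to the right, so each horizontal integral is at most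
`y^c / (|log y| T)` and the far vertical one at most `2T / R`. Taking `R = T²` the whole
integral is `O(1/T)`.
-/

open Complex Filter Set

lemma integral_const_rpow {y : ℝ} (hy0 : 0 < y) (hy1 : y ≠ 1) (a b : ℝ) :
    ∫ x in a..b, y ^ x = (y ^ b - y ^ a) / Real.log y := by
  have hlog : Real.log y ≠ 0 := Real.log_ne_zero_of_pos_of_ne_one hy0 hy1
  simp only [Real.rpow_def_of_pos hy0]
  rw [intervalIntegral.integral_comp_mul_left (fun u => Real.exp u) hlog, integral_exp,
    smul_eq_mul]
  ring

lemma integral_const_rpow_le {y : ℝ} (hy0 : 0 < y) (hy1 : y < 1) (a b : ℝ) :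
    ∫ x in a..b, y ^ x ≤ y ^ a / -Real.log y := by
  have hlog : 0 < -Real.log y := neg_pos.mpr (Real.log_neg hy0 hy1)
  rw [integral_const_rpow hy0 hy1.ne, ← neg_div_neg_eq, neg_sub]
  gcongr
  linarith [Real.rpow_pos_of_pos hy0 b]

lemma norm_ofReal_cpow_div_le {y : ℝ} (hy : 0 < y) {s : ℂ} {r : ℝ} (hr : 0 < r)
    (hrs : r ≤ ‖s‖) : ‖(y : ℂ) ^ s / s‖ ≤ y ^ s.re / r := by
  rw [norm_div, norm_cpow_eq_rpow_re_of_pos hy]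
  gcongr

lemma norm_integral_horizontal_le {y : ℝ} (hy0 : 0 < y) (hy1 : y < 1) {t : ℝ} (ht : t ≠ 0)
    {a b : ℝ} (hab : a ≤ b) :
    ‖∫ x in a..b, (y : ℂ) ^ ((x : ℂ) + t * I) / ((x : ℂ) + t * I)‖ ≤
      y ^ a / (-Real.log y * |t|) := by
  have hpointwise (x : ℝ) :
      ‖(y : ℂ) ^ ((x : ℂ) + t * I) / ((x : ℂ) + t * I)‖ ≤ y ^ x / |t| := by
    have hnorm : |t| ≤ ‖(x : ℂ) + t * I‖ := by simpa using abs_im_le_norm ((x : ℂ) + t * I)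
    simpa using norm_ofReal_cpow_div_le hy0 (abs_pos.mpr ht) hnorm
  have hcont : Continuous fun x : ℝ => y ^ x / |t| :=
    (Real.continuous_const_rpow hy0.ne').div_const _
  calc _ ≤ ∫ x in a..b, y ^ x / |t| :=
        intervalIntegral.norm_integral_le_of_norm_le hab
          (Eventually.of_forall fun x _ => hpointwise x) (hcont.intervalIntegrable a b)
    _ = (∫ x in a..b, y ^ x) / |t| := intervalIntegral.integral_div _ _
    _ ≤ y ^ a / -Real.log y / |t| := by gcongr; exact integral_const_rpow_le hy0 hy1 a b
    _ = y ^ a / (-Real.log y * |t|) := div_div _ _ _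

lemma norm_integral_vertical_le {y : ℝ} (hy0 : 0 < y) (hy1 : y ≤ 1) {R : ℝ} (hR : 0 < R)
    {T : ℝ} (hT : 0 ≤ T) :
    ‖∫ t in (-T)..T, (y : ℂ) ^ ((R : ℂ) + t * I) / ((R : ℂ) + t * I)‖ ≤ 2 * T / R := by
  have hpointwise (t : ℝ) :
      ‖(y : ℂ) ^ ((R : ℂ) + t * I) / ((R : ℂ) + t * I)‖ ≤ 1 / R := by
    have hnorm : R ≤ ‖(R : ℂ) + t * I‖ := by simpa using re_le_norm ((R : ℂ) + t * I)
    have h := norm_ofReal_cpow_div_le hy0 hR hnorm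
    simp only [add_re, ofReal_re, mul_re, I_re, mul_zero, ofReal_im, I_im, mul_one, sub_self,
      add_zero] at h
    exact h.trans (by gcongr; exact Real.rpow_le_one hy0.le hy1 hR.le)
  calc _ ≤ 1 / R * |T - -T| :=
        intervalIntegral.norm_integral_le_of_norm_le_const fun t _ => hpointwise t
    _ = 2 * T / R := by rw [sub_neg_eq_add, abs_of_nonneg (by linarith)]; ring

lemma differentiableOn_ofReal_cpow_div_self {y : ℝ} (hy : 0 < y) :
    DifferentiableOn ℂ (fun s : ℂ => (y : ℂ) ^ s / s) {0}ᶜ :=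
  ((differentiable_id.const_cpow (Or.inl (ofReal_ne_zero.mpr hy.ne'))).differentiableOn).div
    differentiableOn_id fun _ hs => hs

lemma integral_vertical_eq_of_rect {y : ℝ} (hy : 0 < y) {c R : ℝ} (hc : 0 < c) (hcR : c ≤ R)
    (T : ℝ) :
    I • ∫ t in (-T)..T, (y : ℂ) ^ ((c : ℂ) + t * I) / ((c : ℂ) + t * I) =
      (∫ x in c..R, (y : ℂ) ^ ((x : ℂ) + (-T : ℝ) * I) / ((x : ℂ) + (-T : ℝ) * I)) -
      (∫ x in c..R, (y : ℂ) ^ ((x : ℂ) + T * I) / ((x : ℂ) + T * I)) +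
      I • ∫ t in (-T)..T, (y : ℂ) ^ ((R : ℂ) + t * I) / ((R : ℂ) + t * I) := by
  have hrect : uIcc c R ×ℂ uIcc (-T) T ⊆ {0}ᶜ := fun s hs hs0 => by
    have hre : s.re ∈ uIcc c R := hs.1
    rw [uIcc_of_le hcR, mem_singleton_iff.mp hs0, zero_re] at hre
    exact hc.not_ge hre.1
  have h := integral_boundary_rect_eq_zero_of_differentiableOn (fun s : ℂ => (y : ℂ) ^ s / s)
    (c - T * I) (R + T * I) <| by
      simpa using (differentiableOn_ofReal_cpow_div_self hy).mono hrect
  simp only [sub_re, ofReal_re, mul_re, I_re, mul_zero, ofReal_im, I_im, mul_one, sub_self,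
    sub_zero, add_re, add_zero, sub_im, mul_im, zero_sub, add_im, zero_add] at h
  exact (sub_eq_zero.mp h).symm

lemma norm_integral_perron_le {y : ℝ} (hy0 : 0 < y) (hy1 : y < 1) {c R : ℝ} (hc : 0 < c)
    (hcR : c ≤ R) {T : ℝ} (hT : 0 < T) :
    ‖∫ t in (-T)..T, (y : ℂ) ^ ((c : ℂ) + t * I) / ((c : ℂ) + t * I)‖ ≤
      2 * (y ^ c / (-Real.log y * T)) + 2 * T / R := by
  have hbottom := norm_integral_horizontal_le hy0 hy1 (neg_ne_zero.mpr hT.ne') hcR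
  have htop := norm_integral_horizontal_le hy0 hy1 hT.ne' hcR
  have hright := norm_integral_vertical_le hy0 hy1.le (hc.trans_le hcR) hT.le
  rw [abs_neg, abs_of_pos hT] at hbottom
  rw [abs_of_pos hT] at htop
  rw [← one_mul ‖_‖, ← norm_I, ← norm_smul, integral_vertical_eq_of_rect hy0 hc hcR T]
  calc _ ≤ ‖(∫ x in c..R, (y : ℂ) ^ ((x : ℂ) + (-T : ℝ) * I) / ((x : ℂ) + (-T : ℝ) * I))‖ +
        ‖∫ x in c..R, (y : ℂ) ^ ((x : ℂ) + T * I) / ((x : ℂ) + T * I)‖ +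
        ‖I • ∫ t in (-T)..T, (y : ℂ) ^ ((R : ℂ) + t * I) / ((R : ℂ) + t * I)‖ :=
        (norm_add_le _ _).trans (by gcongr; exact norm_sub_le _ _)
    _ ≤ _ := by
      rw [norm_smul, norm_I, one_mul]
      linarith

lemma tendsto_integral_perron_zero {y : ℝ} (hy0 : 0 < y) (hy1 : y < 1) {c : ℝ} (hc : 0 < c) :
    Tendsto (fun T : ℝ => ∫ t in (-T)..T, (y : ℂ) ^ ((c : ℂ) + t * I) / ((c : ℂ) + t * I))
      atTop (nhds 0) := by
  set C := 2 * (y ^ c / -Real.log y) + 2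
  refine squeeze_zero_norm' (a := fun T => C / T) ?_ (tendsto_const_nhds.div_atTop tendsto_id)
  filter_upwards [eventually_ge_atTop 1, eventually_ge_atTop c] with T hT1 hTc
  have hT : 0 < T := one_pos.trans_le hT1
  calc _ ≤ 2 * (y ^ c / (-Real.log y * T)) + 2 * T / T ^ 2 :=
        norm_integral_perron_le hy0 hy1 hc (hTc.trans (by nlinarith)) hT
    _ = C / T := by field_simp; ring

/-- For real `c > 0` and `0 < y < 1`, the Perron integral
`(1/(2πi)) ∫_{c-i∞}^{c+i∞} y^s ds/s`, interpreted as the symmetric limit of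
integrals from `c - iT` to `c + iT`, equals `0`. -/
theorem perron_formula_of_lt_one (c y : ℝ) (hc : 0 < c) (hy0 : 0 < y) (hy1 : y < 1) :
    Tendsto (fun T : ℝ =>
      (1 / (2 * Real.pi * I)) *
        ∫ t in (-T)..T, (y : ℂ) ^ ((c : ℂ) + t * I) / ((c : ℂ) + t * I) * I)
      atTop (nhds 0) := by
  have h := ((tendsto_integral_perron_zero hy0 hy1 hc).mul_const I).const_mul
    (1 / (2 * Real.pi * I))
  rw [zero_mul, mul_zero] at h
  simpa only [intervalIntegral.integral_mul_const] using h
end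

section
/- Let (Y_p)_{p prime} be independent random variables taking values 1 and -1 each with probability 1/2. Then the random product ∏_p (1 - Y_p/p)^{-1} converges almost surely to a finite nonzero limit. -/
/-!
Write `(1 - x)⁻¹ = exp (x - r x)` with `r x = log (1 - x) + x`, so `|r x| ≤ 2 x²` for
`|x| ≤ 1/2`. Along the primes `∑ r (Y_p / p)` converges absolutely, while `∑ Y_p / p` is a
Rademacher series with square-summable coefficients: its partial sums form an `L²`-bounded
martingale (Kolmogorov's one-series theorem), hence converge almost surely. The product is then
the exponential of a convergent series, so its limit is finite and nonzero.
-/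

open Filter MeasureTheory ProbabilityTheory Topology

lemma Finset.prod_preimage_val_eq_prod_dite {ι M : Type*} [CommMonoid M] {P : ι → Prop}
    [DecidablePred P] (t : Finset ι) (f : Subtype P → M) :
    ∏ i ∈ t.preimage Subtype.val Subtype.val_injective.injOn, f i =
      ∏ i ∈ t, if h : P i then f ⟨i, h⟩ else 1 :=
  (Finset.prod_congr rfl fun i _ => by rw [dif_pos i.2]).trans <|
    Finset.prod_preimage Subtype.val t _ (fun i => if h : P i then f ⟨i, h⟩ else 1)
      fun i _ hi => dif_neg fun h => hi ⟨⟨i, h⟩, rfl⟩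

lemma Real.abs_log_one_sub_add_self_le {x : ℝ} (hx : |x| ≤ 1 / 2) :
    |Real.log (1 - x) + x| ≤ 2 * x ^ 2 := by
  have h := Real.abs_log_sub_add_sum_range_le (x := x) (by linarith) 1
  simp only [Finset.sum_range_one, zero_add, pow_one, Nat.cast_zero, div_one] at h
  calc |Real.log (1 - x) + x| = |x + Real.log (1 - x)| := by rw [add_comm]
    _ ≤ |x| ^ 2 / (1 - |x|) := h
    _ ≤ |x| ^ 2 / (1 / 2) := by gcongr; linarith
    _ = 2 * x ^ 2 := by rw [sq_abs]; ring

theorem tendsto_prod_inv_one_sub {ι : Type*} {x : ι → ℝ} (hx : ∀ i, |x i| ≤ 1 / 2)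
    (hx2 : Summable fun i => x i ^ 2) {s : ℕ → Finset ι} (hs : Tendsto s atTop atTop) {c : ℝ}
    (hsum : Tendsto (fun n => ∑ i ∈ s n, x i) atTop (𝓝 c)) :
    Tendsto (fun n => ∏ i ∈ s n, (1 - x i)⁻¹) atTop
      (𝓝 (Real.exp (c - ∑' i, (Real.log (1 - x i) + x i)))) := by
  have hr : Summable fun i => Real.log (1 - x i) + x i :=
    (hx2.mul_left 2).of_norm_bounded fun i => Real.abs_log_one_sub_add_self_le (hx i)
  have hprod (t : Finset ι) : ∏ i ∈ t, (1 - x i)⁻¹ =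
      Real.exp (∑ i ∈ t, x i - ∑ i ∈ t, (Real.log (1 - x i) + x i)) := by
    rw [← Finset.sum_sub_distrib, Real.exp_sum]
    refine Finset.prod_congr rfl fun i _ => ?_
    have hpos : 0 < 1 - x i := by linarith [(abs_le.1 (hx i)).2]
    rw [show x i - (Real.log (1 - x i) + x i) = -Real.log (1 - x i) by ring, Real.exp_neg,
      Real.exp_log hpos]
  simp_rw [hprod]
  exact (Real.continuous_exp.tendsto _).comp (hsum.sub (hr.hasSum.comp hs))

theorem MeasureTheory.Submartingale.ae_exists_tendsto_of_integral_sq_le {Ω : Type*}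
    {m : MeasurableSpace Ω} {μ : Measure Ω} [IsProbabilityMeasure μ] {ℱ : Filtration ℕ m}
    {f : ℕ → Ω → ℝ} (hf : Submartingale f ℱ μ) (hL2 : ∀ n, MemLp (f n) 2 μ) {C : ℝ}
    (hC : ∀ n, ∫ ω, f n ω ^ 2 ∂μ ≤ C) :
    ∀ᵐ ω ∂μ, ∃ c, Tendsto (fun n => f n ω) atTop (𝓝 c) := by
  refine hf.exists_ae_tendsto_of_bdd (R := (1 + C).toNNReal) fun n => ?_
  rw [eLpNorm_one_eq_lintegral_enorm,
    ← ofReal_integral_norm_eq_lintegral_enorm ((hL2 n).integrable one_le_two)]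
  refine ENNReal.ofReal_le_ofReal ?_
  calc ∫ ω, ‖f n ω‖ ∂μ ≤ ∫ ω, (1 + f n ω ^ 2) ∂μ := by
        refine integral_mono ((hL2 n).integrable one_le_two).norm
          ((integrable_const 1).add (hL2 n).integrable_sq) fun ω => ?_
        rw [Real.norm_eq_abs]
        nlinarith [sq_abs (f n ω), sq_nonneg (|f n ω| - 1), abs_nonneg (f n ω)]
    _ = 1 + ∫ ω, f n ω ^ 2 ∂μ := by
        rw [integral_add (integrable_const 1) (hL2 n).integrable_sq]
        simp
    _ ≤ 1 + C := by linarith [hC n]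

namespace MeasureTheory.Filtration

variable {Ω ι β : Type*} {m : MeasurableSpace Ω} [MeasurableSpace β]

def naturalOfFinsets (X : ι → Ω → β) (hX : ∀ i, Measurable (X i)) (s : ℕ → Finset ι)
    (hs : Monotone s) : Filtration ℕ m where
  seq n := ⨆ i ∈ s n, MeasurableSpace.comap (X i) inferInstance
  mono' _ _ hnk := biSup_mono fun _ hi => hs hnk hi
  le' _ := iSup₂_le fun i _ => (hX i).comap_le

end MeasureTheory.Filtration

namespace ProbabilityTheory

open Filtration

section Kolmogorov

variable {Ω ι : Type*} {m : MeasurableSpace Ω} {μ : Measure Ω} {X : ι → Ω → ℝ}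

lemma measurable_sum_biSup_comap (t : Set ι) (u : Finset ι) (hu : ↑u ⊆ t) :
    Measurable[⨆ i ∈ t, MeasurableSpace.comap (X i) inferInstance] (∑ i ∈ u, X i) := by
  rw [Finset.sum_fn]
  exact Finset.measurable_sum u fun i hi => measurable_iff_comap_le.2 <|
    le_iSup₂ (f := fun j (_ : j ∈ t) => MeasurableSpace.comap (X j) inferInstance) i (hu hi)

lemma integral_sum_eq_zero (hint : ∀ i, Integrable (X i) μ) (hmean : ∀ i, μ[X i] = 0)
    (t : Finset ι) : μ[∑ i ∈ t, X i] = 0 := by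
  simp only [Finset.sum_apply, integral_finsetSum t fun i _ => hint i, hmean,
    Finset.sum_const_zero]

variable [IsProbabilityMeasure μ] {s : ℕ → Finset ι}

section

variable {hX : ∀ i, Measurable (X i)} {hs : Monotone s}

lemma iIndepFun.condExp_sum_naturalOfFinsets_eq_zero (hindep : iIndepFun X μ)
    (hint : ∀ i, Integrable (X i) μ) (hmean : ∀ i, μ[X i] = 0) {n : ℕ} {t : Finset ι}
    (ht : Disjoint t (s n)) :
    μ[∑ i ∈ t, X i | naturalOfFinsets X hX s hs n] =ᵐ[μ] 0 := by
  have hindep_t : Indep (⨆ i ∈ (t : Set ι), MeasurableSpace.comap (X i) inferInstance)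
      (naturalOfFinsets X hX s hs n) μ :=
    indep_iSup_of_disjoint (fun i => (hX i).comap_le) hindep.iIndep (Finset.disjoint_coe.2 ht)
  refine (condExp_indep_eq (iSup₂_le fun i _ => (hX i).comap_le) (Filtration.le _ n)
    (measurable_sum_biSup_comap _ t subset_rfl).stronglyMeasurable hindep_t).trans ?_
  exact ae_of_all _ fun _ => integral_sum_eq_zero hint hmean t

lemma iIndepFun.martingale_sum_naturalOfFinsets (hindep : iIndepFun X μ)
    (hint : ∀ i, Integrable (X i) μ) (hmean : ∀ i, μ[X i] = 0) :
    Martingale (fun n => ∑ i ∈ s n, X i) (naturalOfFinsets X hX s hs) μ := by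
  classical
  have hadapted : StronglyAdapted (naturalOfFinsets X hX s hs) (fun n => ∑ i ∈ s n, X i) :=
    fun n => (measurable_sum_biSup_comap _ (s n) subset_rfl).stronglyMeasurable
  refine ⟨hadapted, fun i j hij => ?_⟩
  have hsplit : ∑ k ∈ s j, X k = ∑ k ∈ s i, X k + ∑ k ∈ s j \ s i, X k := by
    rw [add_comm, Finset.sum_sdiff (hs hij)]
  have hint_sum (u : Finset ι) : Integrable (∑ k ∈ u, X k) μ :=
    integrable_finsetSum' u fun k _ => hint k
  calc μ[∑ k ∈ s j, X k | naturalOfFinsets X hX s hs i]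
      =ᵐ[μ] μ[∑ k ∈ s i, X k | naturalOfFinsets X hX s hs i]
        + μ[∑ k ∈ s j \ s i, X k | naturalOfFinsets X hX s hs i] := by
        rw [hsplit]; exact condExp_add (hint_sum _) (hint_sum _) _
    _ =ᵐ[μ] ∑ k ∈ s i, X k + 0 := by
        rw [condExp_of_stronglyMeasurable (Filtration.le _ i) (hadapted i) (hint_sum _)]
        exact EventuallyEq.rfl.add
          (hindep.condExp_sum_naturalOfFinsets_eq_zero hint hmean Finset.sdiff_disjoint)
    _ = ∑ k ∈ s i, X k := add_zero _

end

theorem iIndepFun.ae_exists_tendsto_sum (hX : ∀ i, Measurable (X i)) (hindep : iIndepFun X μ)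
    (hL2 : ∀ i, MemLp (X i) 2 μ) (hmean : ∀ i, μ[X i] = 0)
    (hvar : Summable fun i => variance (X i) μ) (hs : Monotone s) :
    ∀ᵐ ω ∂μ, ∃ c, Tendsto (fun n => ∑ i ∈ s n, X i ω) atTop (𝓝 c) := by
  have hint i : Integrable (X i) μ := (hL2 i).integrable one_le_two
  have hL2_sum n : MemLp (∑ i ∈ s n, X i) 2 μ := memLp_finsetSum' _ fun i _ => hL2 i
  have hbound n : ∫ ω, (∑ i ∈ s n, X i) ω ^ 2 ∂μ ≤ ∑' i, variance (X i) μ := by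
    rw [← variance_of_integral_eq_zero (hL2_sum n).aestronglyMeasurable.aemeasurable
      (integral_sum_eq_zero hint hmean _),
      IndepFun.variance_sum (fun i _ => hL2 i) fun i _ j _ hij => hindep.indepFun hij]
    exact hvar.sum_le_tsum _ fun i _ => variance_nonneg _ _
  have hmart := hindep.martingale_sum_naturalOfFinsets (hX := hX) (hs := hs) hint hmean
  simpa only [Finset.sum_apply] using
    hmart.submartingale.ae_exists_tendsto_of_integral_sq_le hL2_sum hbound

end Kolmogorov

section Rademacher

variable {Ω : Type*} {m : MeasurableSpace Ω} {μ : Measure Ω} {X : Ω → ℝ}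

structure IsRademacher (X : Ω → ℝ) (μ : Measure Ω) : Prop where
  measurable : Measurable X
  ae_eq_one_or_eq_neg_one : ∀ᵐ ω ∂μ, X ω = 1 ∨ X ω = -1
  measure_eq_one_eq_measure_eq_neg_one : μ {ω | X ω = 1} = μ {ω | X ω = -1}

lemma isRademacher_of_measure_eq_half [IsProbabilityMeasure μ] (hX : Measurable X)
    (h1 : μ {ω | X ω = 1} = ENNReal.ofReal (1 / 2))
    (hm1 : μ {ω | X ω = -1} = ENNReal.ofReal (1 / 2)) : IsRademacher X μ where
  measurable := hX
  ae_eq_one_or_eq_neg_one := by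
    have hA : MeasurableSet {ω | X ω = 1} := hX (measurableSet_singleton 1)
    have hB : MeasurableSet {ω | X ω = -1} := hX (measurableSet_singleton (-1))
    have hdisj : Disjoint {ω | X ω = 1} {ω | X ω = -1} :=
      Set.disjoint_left.2 fun ω (h1 : X ω = 1) (h2 : X ω = -1) => by linarith
    have hunion : μ ({ω | X ω = 1} ∪ {ω | X ω = -1}) = 1 := by
      rw [measure_union hdisj hB, h1, hm1, ← ENNReal.ofReal_add (by norm_num) (by norm_num)]
      norm_num
    have hcompl : {ω | ¬(X ω = 1 ∨ X ω = -1)} = ({ω | X ω = 1} ∪ {ω | X ω = -1})ᶜ := by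
      ext; simp
    rw [ae_iff, hcompl, prob_compl_eq_one_sub (hA.union hB), hunion, tsub_self]
  measure_eq_one_eq_measure_eq_neg_one := h1.trans hm1.symm

namespace IsRademacher

variable (hX : IsRademacher X μ)
include hX

lemma memLp [IsFiniteMeasure μ] (p : ENNReal) : MemLp X p μ := by
  refine (memLp_top_of_bound hX.measurable.aestronglyMeasurable 1 ?_).mono_exponent le_top
  filter_upwards [hX.ae_eq_one_or_eq_neg_one] with ω h
  rcases h with h | h <;> simp [h]

lemma integral_eq_zero [IsFiniteMeasure μ] : μ[X] = 0 := by
  have hA : MeasurableSet {ω | X ω = 1} := hX.measurable (measurableSet_singleton 1)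
  have hB : MeasurableSet {ω | X ω = -1} := hX.measurable (measurableSet_singleton (-1))
  have hsplit : X =ᵐ[μ] {ω | X ω = 1}.indicator 1 - {ω | X ω = -1}.indicator 1 := by
    filter_upwards [hX.ae_eq_one_or_eq_neg_one] with ω h
    rcases h with h | h <;> norm_num [Set.indicator, h]
  rw [integral_congr_ae hsplit, integral_sub' ((integrable_const 1).indicator hA)
    ((integrable_const 1).indicator hB), integral_indicator_one hA, integral_indicator_one hB,
    measureReal_def, measureReal_def, hX.measure_eq_one_eq_measure_eq_neg_one, sub_self]

lemma variance_eq_one [IsProbabilityMeasure μ] : variance X μ = 1 := by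
  rw [variance_of_integral_eq_zero hX.measurable.aemeasurable hX.integral_eq_zero]
  calc ∫ ω, X ω ^ 2 ∂μ = ∫ _, (1 : ℝ) ∂μ := integral_congr_ae <| by
        filter_upwards [hX.ae_eq_one_or_eq_neg_one] with ω h
        rcases h with h | h <;> simp [h]
    _ = 1 := by simp

end IsRademacher

theorem ae_exists_tendsto_sum_mul_of_isRademacher [IsProbabilityMeasure μ] {ι : Type*}
    {Y : ι → Ω → ℝ} (hY : ∀ i, IsRademacher (Y i) μ) (hindep : iIndepFun Y μ) {a : ι → ℝ}
    (ha : Summable fun i => a i ^ 2) {s : ℕ → Finset ι} (hs : Monotone s) :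
    ∀ᵐ ω ∂μ, ∃ c, Tendsto (fun n => ∑ i ∈ s n, a i * Y i ω) atTop (𝓝 c) := by
  refine iIndepFun.ae_exists_tendsto_sum (X := fun i ω => a i * Y i ω)
    (fun i => (hY i).measurable.const_mul _)
    (hindep.comp _ fun i => measurable_const_mul (a i))
    (fun i => ((hY i).memLp 2).const_mul (a i))
    (fun i => by simp only [integral_const_mul, (hY i).integral_eq_zero, mul_zero])
    (ha.congr fun i => ?_) hs
  rw [variance_const_mul, (hY i).variance_eq_one, mul_one]

end Rademacher

end ProbabilityTheory

/-- Let `(Y_p)_{p prime}` be independent random variables taking values `1`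
and `-1` each with probability `1/2`. Then the random Euler product
`∏_p (1 - Y_p/p)⁻¹` (partial products over primes `p < n`) converges almost
surely to a finite nonzero limit. -/
theorem random_euler_product_pm_one_converges_ae
    {Ω : Type*} [MeasurableSpace Ω] (μ : Measure Ω) [IsProbabilityMeasure μ]
    (Y : {p : ℕ // p.Prime} → Ω → ℝ)
    (hmeas : ∀ p, Measurable (Y p))
    (hindep : iIndepFun Y μ)
    (h1 : ∀ p : {p : ℕ // p.Prime}, μ {ω | Y p ω = 1} = ENNReal.ofReal (1 / 2 : ℝ))
    (hm1 : ∀ p : {p : ℕ // p.Prime}, μ {ω | Y p ω = -1} = ENNReal.ofReal (1 / 2 : ℝ)) :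
    ∀ᵐ ω ∂μ, ∃ l : ℝ, l ≠ 0 ∧
      Tendsto (fun n : ℕ => ∏ p ∈ Finset.range n,
          if hp : p.Prime then (1 - Y ⟨p, hp⟩ ω / p)⁻¹ else 1)
        atTop (nhds l) := by
  have hY p : IsRademacher (Y p) μ := isRademacher_of_measure_eq_half (hmeas p) (h1 p) (hm1 p)
  have hsq : Summable fun p : {p : ℕ // p.Prime} => ((p : ℝ)⁻¹) ^ 2 := by
    simpa only [Function.comp_def, inv_pow] using
      (Real.summable_nat_pow_inv.2 one_lt_two).comp_injective Subtype.val_injective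
  let s (n : ℕ) : Finset {p : ℕ // p.Prime} :=
    (Finset.range n).preimage Subtype.val Subtype.val_injective.injOn
  have hs : Tendsto s atTop atTop :=
    (Filter.tendsto_finset_preimage_atTop_atTop Subtype.val_injective).comp tendsto_finset_range
  have hs_mono : Monotone s :=
    (Finset.monotone_preimage Subtype.val_injective).comp Finset.range_mono
  filter_upwards [ae_exists_tendsto_sum_mul_of_isRademacher hY hindep hsq hs_mono,
    ae_all_iff.2 fun p => (hY p).ae_eq_one_or_eq_neg_one] with ω ⟨c, hc⟩ hω
  have habs p : |Y p ω / p| = (p : ℝ)⁻¹ := by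
    rcases hω p with h | h <;> simp [h, abs_div]
  have hx p : |Y p ω / p| ≤ 1 / 2 := by
    rw [habs, one_div]
    exact inv_anti₀ two_pos (by exact_mod_cast p.2.two_le)
  have hx2 : Summable fun p : {p : ℕ // p.Prime} => (Y p ω / p) ^ 2 :=
    hsq.congr fun p => by rw [← habs, sq_abs]
  have hprod := tendsto_prod_inv_one_sub hx hx2 hs (by simpa only [div_eq_inv_mul] using hc)
  exact ⟨_, (Real.exp_pos _).ne',
    hprod.congr fun n => Finset.prod_preimage_val_eq_prod_dite (Finset.range n) _⟩
end

section
/- Let (X_p)_{p prime} be the independent random variables where X_p is 1 with probability p/(2(p+1)), 0 with probability 1/(p+1), and -1 with probability p/(2(p+1)), and let L(1,X) = ∏_p (1 - X_p/p)^{-1}. Then E[L(1,X)^{-2}] = ζ(2)/ζ(3). -/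
/-!
Write `g_p = 1 - X_p / p`, so that `L(1,X)⁻¹` is the limit of the partial products
`Y_n = ∏_{p < n} g_p`. The factors are independent with `E[g_p] = 1` and
`E[g_p²] = 1 + 1/(p(p+1)) = (1 - p⁻³) / (1 - p⁻²)`, hence `E[Y_n Y_m] = E[Y_n²] = ∏_{p < n} E[g_p²]`
for `n ≤ m`. Thus `Y_n` has orthogonal increments in `L²`, `‖Y_m - Y_n‖² = E[Y_m²] - E[Y_n²]`,
and since these second moments converge to the Euler product `ζ(2)/ζ(3)`, `Y_n` converges in
`L²`. Its limit agrees a.s. with `L⁻¹`, and so `E[L⁻²] = lim E[Y_n²] = ζ(2)/ζ(3)`.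
-/

open Filter MeasureTheory ProbabilityTheory Topology

theorem Finset.prod_dite_eq_prod_subtype {ι M : Type*} [CommMonoid M] (s : Finset ι)
    (p : ι → Prop) [DecidablePred p] (F : Subtype p → M) :
    ∏ x ∈ s, (if h : p x then F ⟨x, h⟩ else 1) = ∏ x ∈ s.subtype p, F x := by
  rw [← Finset.prod_filter_of_ne (p := p) fun x _ hx ↦ ?_, ← Finset.prod_subtype_eq_prod_filter]
  · exact Finset.prod_congr rfl fun x _ ↦ dif_pos x.2
  · by_contra h
    exact hx (dif_neg h)

theorem mul_eq_one_of_tendsto_of_tendsto_inv {α K : Type*} [Field K] [TopologicalSpace K]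
    [IsTopologicalRing K] [T2Space K] {l : Filter α} [l.NeBot] {u : α → K} {z w : K}
    (hu : ∀ n, u n ≠ 0) (hz : Tendsto u l (𝓝 z)) (hw : Tendsto (fun n ↦ (u n)⁻¹) l (𝓝 w)) :
    z * w = 1 :=
  tendsto_nhds_unique ((hz.mul hw).congr fun n ↦ mul_inv_cancel₀ (hu n)) tendsto_const_nhds

theorem exists_ofReal_eq_of_tendsto {α : Type*} {l : Filter α} [l.NeBot] {a : α → ℝ} {z : ℂ}
    (h : Tendsto (fun n ↦ (a n : ℂ)) l (𝓝 z)) : ∃ A : ℝ, (A : ℂ) = z ∧ Tendsto a l (𝓝 A) := by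
  obtain ⟨A, rfl⟩ := Complex.isUniformEmbedding_ofReal.isClosedEmbedding.isClosed_range
    |>.mem_of_tendsto h (.of_forall fun n ↦ ⟨a n, rfl⟩)
  exact ⟨A, rfl, tendsto_ofReal_iff.1 h⟩

section FiniteRange

variable {Ω β : Type*} [MeasurableSpace Ω] {μ : Measure Ω} [MeasurableSpace β]
  [MeasurableSingletonClass β] {ξ : Ω → β}

theorem ae_mem_of_sum_measure_preimage_singleton_eq_one [IsProbabilityMeasure μ]
    (hξ : Measurable ξ) {s : Finset β} (hs : ∑ x ∈ s, μ (ξ ⁻¹' {x}) = 1) :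
    ∀ᵐ ω ∂μ, ξ ω ∈ s := by
  rw [sum_measure_preimage_singleton s fun x _ ↦ hξ (measurableSet_singleton x)] at hs
  exact (prob_compl_eq_zero_iff (hξ s.measurableSet)).2 hs

theorem integral_comp_eq_sum_of_ae_mem [IsFiniteMeasure μ] (hξ : Measurable ξ) {s : Finset β}
    (hs : ∀ᵐ ω ∂μ, ξ ω ∈ s) (ψ : β → ℝ) :
    ∫ ω, ψ (ξ ω) ∂μ = ∑ x ∈ s, μ.real (ξ ⁻¹' {x}) * ψ x := by
  classical
  have hfiber : ∀ x, MeasurableSet (ξ ⁻¹' {x}) := fun x ↦ hξ (measurableSet_singleton x)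
  have hsplit : (fun ω ↦ ψ (ξ ω)) =ᵐ[μ] fun ω ↦ ∑ x ∈ s, (ξ ⁻¹' {x}).indicator (fun _ ↦ ψ x) ω := by
    filter_upwards [hs] with ω hω
    simp only [Set.indicator_apply, Set.mem_preimage, Set.mem_singleton_iff]
    rw [Finset.sum_ite_eq, if_pos hω]
  rw [integral_congr_ae hsplit,
    integral_finsetSum _ fun x _ ↦ (integrable_const _).indicator (hfiber x)]
  simp_rw [integral_indicator_const _ (hfiber _), smul_eq_mul]

end FiniteRange

theorem memLp_finset_prod_of_memLp_top {Ω ι 𝕜 : Type*} [MeasurableSpace Ω] {μ : Measure Ω}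
    [IsFiniteMeasure μ] [NormedCommRing 𝕜] {g : ι → Ω → 𝕜} {s : Finset ι}
    (hg : ∀ i ∈ s, MemLp (g i) ⊤ μ) (p : ENNReal) : MemLp (fun ω ↦ ∏ i ∈ s, g i ω) p μ := by
  have hprod := MemLp.prod' (p := fun _ ↦ ⊤) hg
  simp only [ENNReal.inv_top, Finset.sum_const_zero, ENNReal.inv_zero] at hprod
  exact hprod.mono_exponent le_top

namespace ProbabilityTheory.iIndepFun

variable {Ω ι : Type*} [MeasurableSpace Ω] {μ : Measure Ω} {g : ι → Ω → ℝ}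

theorem integral_finset_prod (hg : iIndepFun g μ) (hmeas : ∀ i, AEStronglyMeasurable (g i) μ)
    (s : Finset ι) : ∫ ω, ∏ i ∈ s, g i ω ∂μ = ∏ i ∈ s, ∫ ω, g i ω ∂μ := by
  have hs : iIndepFun (fun i : s ↦ g i) μ := hg.precomp Subtype.val_injective
  simp_rw [← Finset.prod_coe_sort s]
  exact hs.integral_fun_prod_eq_prod_integral fun i ↦ hmeas i

theorem integral_prod_mul_prod_of_subset (hg : iIndepFun g μ)
    (hmeas : ∀ i, Measurable (g i)) (hmean : ∀ i, ∫ ω, g i ω ∂μ = 1) {s t : Finset ι}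
    (hst : s ⊆ t) :
    ∫ ω, (∏ i ∈ s, g i ω) * ∏ i ∈ t, g i ω ∂μ = ∏ i ∈ s, ∫ ω, g i ω ^ 2 ∂μ := by
  classical
  let k : ι → ℕ := fun i ↦ if i ∈ s then 2 else 1
  have hprod : ∀ ω, (∏ i ∈ s, g i ω) * ∏ i ∈ t, g i ω = ∏ i ∈ t, g i ω ^ k i := by
    intro ω
    rw [← Finset.inter_eq_right.2 hst, ← Finset.prod_ite_mem t s, ← Finset.prod_mul_distrib]
    refine Finset.prod_congr rfl fun i _ ↦ ?_
    by_cases hi : i ∈ s <;> simp [k, hi, sq]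
  have hk : iIndepFun (fun i ω ↦ g i ω ^ k i) μ :=
    hg.comp (fun i x ↦ x ^ k i) fun i ↦ measurable_id.pow_const _
  simp_rw [hprod]
  rw [hk.integral_finset_prod fun i ↦ ((hmeas i).pow_const _).aestronglyMeasurable,
    ← Finset.inter_eq_right.2 hst, ← Finset.prod_ite_mem t s]
  refine Finset.prod_congr rfl fun i _ ↦ ?_
  by_cases hi : i ∈ s <;> simp [k, hi, hmean]

end ProbabilityTheory.iIndepFun

theorem exists_tendsto_of_inner_eq {E : Type*} [NormedAddCommGroup E] [InnerProductSpace ℝ E]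
    [CompleteSpace E] {x : ℕ → E} {a : ℕ → ℝ} {A : ℝ}
    (hx : ∀ n m, n ≤ m → inner ℝ (x n) (x m) = a n) (ha : Tendsto a atTop (𝓝 A)) :
    ∃ z, Tendsto x atTop (𝓝 z) ∧ ‖z‖ ^ 2 = A := by
  have hnorm : ∀ n, ‖x n‖ ^ 2 = a n := fun n ↦ by
    rw [← real_inner_self_eq_norm_sq, hx n n le_rfl]
  have hdist : ∀ n m, n ≤ m → dist (x m) (x n) ^ 2 = a m - a n := fun n m hnm ↦ by
    rw [dist_eq_norm, norm_sub_sq_real, hnorm, hnorm, real_inner_comm, hx n m hnm]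
    ring
  have hcauchy : CauchySeq x := by
    refine Metric.cauchySeq_iff'.2 fun ε hε ↦ ?_
    obtain ⟨N, hN⟩ := Metric.cauchySeq_iff'.1 ha.cauchySeq (ε ^ 2) (by positivity)
    refine ⟨N, fun n hn ↦ lt_of_pow_lt_pow_left₀ 2 hε.le ?_⟩
    rw [hdist N n hn]
    exact (le_abs_self _).trans_lt (hN n hn)
  obtain ⟨z, hz⟩ := cauchySeq_tendsto_of_complete hcauchy
  refine ⟨z, hz, tendsto_nhds_unique ?_ ha⟩
  simpa only [hnorm] using (hz.norm.pow 2)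

theorem exists_subseq_tendsto_ae_of_integral_mul_eq {Ω : Type*} [MeasurableSpace Ω]
    {μ : Measure Ω} {Y : ℕ → Ω → ℝ} (hY : ∀ n, MemLp (Y n) 2 μ) {a : ℕ → ℝ} {A : ℝ}
    (hmul : ∀ n m, n ≤ m → ∫ ω, Y n ω * Y m ω ∂μ = a n) (ha : Tendsto a atTop (𝓝 A)) :
    ∃ Z : Ω → ℝ, ∃ ns : ℕ → ℕ, StrictMono ns ∧
      (∀ᵐ ω ∂μ, Tendsto (fun i ↦ Y (ns i) ω) atTop (𝓝 (Z ω))) ∧ ∫ ω, Z ω ^ 2 ∂μ = A := by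
  have hinner : ∀ n m, n ≤ m → inner ℝ ((hY n).toLp (Y n)) ((hY m).toLp (Y m)) = a n := by
    intro n m hnm
    rw [L2.inner_def, ← hmul n m hnm]
    refine integral_congr_ae ?_
    filter_upwards [(hY n).coeFn_toLp, (hY m).coeFn_toLp] with ω hn hm
    simp [hn, hm, mul_comm]
  obtain ⟨Z, hZ, hZnorm⟩ := exists_tendsto_of_inner_eq (x := fun n ↦ (hY n).toLp (Y n)) hinner ha
  obtain ⟨ns, hns, hns_ae⟩ := (tendstoInMeasure_of_tendsto_Lp hZ).exists_seq_tendsto_ae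
  refine ⟨Z, ns, hns, ?_, ?_⟩
  · filter_upwards [hns_ae, ae_all_iff.2 fun n ↦ (hY n).coeFn_toLp] with ω hω hη
    simpa only [hη] using hω
  · rw [← hZnorm, ← real_inner_self_eq_norm_sq, L2.inner_def]
    simp [sq]

theorem integral_zpow_neg_two_eq_of_tendsto_prod_inv {Ω ι : Type*} [MeasurableSpace Ω]
    {μ : Measure Ω} [IsFiniteMeasure μ] {g : ι → Ω → ℝ} (hg : iIndepFun g μ)
    (hmeas : ∀ i, Measurable (g i)) (hbdd : ∀ i, MemLp (g i) ⊤ μ)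
    (hmean : ∀ i, ∫ ω, g i ω ∂μ = 1) (hne : ∀ᵐ ω ∂μ, ∀ i, g i ω ≠ 0) {S : ℕ → Finset ι}
    (hS : Monotone S) {A : ℝ} (hA : Tendsto (fun n ↦ ∏ i ∈ S n, ∫ ω, g i ω ^ 2 ∂μ) atTop (𝓝 A))
    {L : Ω → ℝ} (hL : ∀ᵐ ω ∂μ, Tendsto (fun n ↦ ∏ i ∈ S n, (g i ω)⁻¹) atTop (𝓝 (L ω))) :
    ∫ ω, L ω ^ (-2 : ℤ) ∂μ = A := by
  obtain ⟨Z, ns, hns, hZ, hZA⟩ := exists_subseq_tendsto_ae_of_integral_mul_eq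
    (fun n ↦ memLp_finset_prod_of_memLp_top (s := S n) (fun i _ ↦ hbdd i) 2)
    (fun n m hnm ↦ hg.integral_prod_mul_prod_of_subset hmeas hmean (hS hnm)) hA
  rw [← hZA]
  refine integral_congr_ae ?_
  filter_upwards [hZ, hL, hne] with ω hZω hLω hneω
  have hZL : Z ω * L ω = 1 := mul_eq_one_of_tendsto_of_tendsto_inv
    (fun n ↦ Finset.prod_ne_zero_iff.2 fun i _ ↦ hneω i) hZω
    (by simpa only [Finset.prod_inv_distrib, Function.comp_def] using hLω.comp hns.tendsto_atTop)
  rw [eq_inv_of_mul_eq_one_left hZL, inv_pow, zpow_neg, zpow_two, sq]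

def HasThreePointLaw {Ω : Type*} [MeasurableSpace Ω] (μ : Measure Ω) (ξ : Ω → ℝ) (q : ℝ) : Prop :=
  μ {ω | ξ ω = 1} = ENNReal.ofReal (q / (2 * (q + 1))) ∧
    μ {ω | ξ ω = 0} = ENNReal.ofReal (1 / (q + 1)) ∧
    μ {ω | ξ ω = -1} = ENNReal.ofReal (q / (2 * (q + 1)))

namespace HasThreePointLaw

variable {Ω : Type*} [MeasurableSpace Ω] {μ : Measure Ω} [IsProbabilityMeasure μ]
  {ξ : Ω → ℝ} {q : ℝ}

theorem ae_mem (h : HasThreePointLaw μ ξ q) (hξ : Measurable ξ) (hq : 0 ≤ q) :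
    ∀ᵐ ω ∂μ, ξ ω ∈ ({1, 0, -1} : Finset ℝ) := by
  obtain ⟨h1, h0, hm1⟩ := h
  refine ae_mem_of_sum_measure_preimage_singleton_eq_one hξ ?_
  have hmass : q / (2 * (q + 1)) + (1 / (q + 1) + q / (2 * (q + 1))) = 1 := by
    field_simp; ring
  rw [Finset.sum_insert (by norm_num), Finset.sum_insert (by norm_num), Finset.sum_singleton]
  change μ {ω | ξ ω = 1} + (μ {ω | ξ ω = 0} + μ {ω | ξ ω = -1}) = 1
  rw [h1, h0, hm1, ← ENNReal.ofReal_add (by positivity) (by positivity),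
    ← ENNReal.ofReal_add (by positivity) (by positivity), hmass, ENNReal.ofReal_one]

theorem integral_comp (h : HasThreePointLaw μ ξ q) (hξ : Measurable ξ) (hq : 0 ≤ q)
    (ψ : ℝ → ℝ) :
    ∫ ω, ψ (ξ ω) ∂μ = q / (2 * (q + 1)) * (ψ 1 + ψ (-1)) + 1 / (q + 1) * ψ 0 := by
  rw [integral_comp_eq_sum_of_ae_mem hξ (h.ae_mem hξ hq), Finset.sum_insert (by norm_num),
    Finset.sum_insert (by norm_num), Finset.sum_singleton]
  obtain ⟨h1, h0, hm1⟩ := h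
  simp only [measureReal_def]
  change (μ {ω | ξ ω = 1}).toReal * _ + ((μ {ω | ξ ω = 0}).toReal * _ +
    (μ {ω | ξ ω = -1}).toReal * _) = _
  rw [h1, h0, hm1, ENNReal.toReal_ofReal (by positivity), ENNReal.toReal_ofReal (by positivity)]
  ring

theorem integral_one_sub_div (h : HasThreePointLaw μ ξ q) (hξ : Measurable ξ) (hq : 0 < q) :
    ∫ ω, 1 - ξ ω / q ∂μ = 1 := by
  rw [h.integral_comp hξ hq.le fun x ↦ 1 - x / q]
  field_simp
  ring

theorem integral_one_sub_div_sq (h : HasThreePointLaw μ ξ q) (hξ : Measurable ξ) (hq : 0 < q) :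
    ∫ ω, (1 - ξ ω / q) ^ 2 ∂μ = 1 + (q * (q + 1))⁻¹ := by
  rw [h.integral_comp hξ hq.le fun x ↦ (1 - x / q) ^ 2]
  field_simp
  ring

theorem ae_one_sub_div_mem_Ioo (h : HasThreePointLaw μ ξ q) (hξ : Measurable ξ) (hq : 1 < q) :
    ∀ᵐ ω ∂μ, 1 - ξ ω / q ∈ Set.Ioo 0 2 := by
  have hq_inv : q⁻¹ < 1 := inv_lt_one_of_one_lt₀ hq
  have hq_inv_pos : 0 < q⁻¹ := by positivity
  filter_upwards [h.ae_mem hξ (by linarith)] with ω hω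
  simp only [Finset.mem_insert, Finset.mem_singleton] at hω
  rcases hω with hω | hω | hω <;>
    simp only [hω, Set.mem_Ioo, neg_div, one_div, zero_div, sub_zero, sub_neg_eq_add] <;>
    constructor <;> linarith

theorem memLp_top_one_sub_div (h : HasThreePointLaw μ ξ q) (hξ : Measurable ξ) (hq : 1 < q) :
    MemLp (fun ω ↦ 1 - ξ ω / q) ⊤ μ := by
  refine memLp_top_of_bound (by fun_prop) 2 ?_
  filter_upwards [h.ae_one_sub_div_mem_Ioo hξ hq] with ω hω
  rw [Real.norm_eq_abs, abs_of_pos hω.1]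
  exact hω.2.le

end HasThreePointLaw

theorem one_add_inv_mul_add_one_eq {x : ℝ} (hx : 1 < x) :
    1 + (x * (x + 1))⁻¹ = (1 - (x ^ 2)⁻¹)⁻¹ / (1 - (x ^ 3)⁻¹)⁻¹ := by
  have h2 : x ^ 2 - 1 ≠ 0 := sub_ne_zero.2 (one_lt_pow₀ hx two_ne_zero).ne'
  have h3 : x ^ 3 - 1 ≠ 0 := sub_ne_zero.2 (one_lt_pow₀ hx three_ne_zero).ne'
  have hx1 : x + 1 ≠ 0 := by linarith
  field_simp
  ring

theorem tendsto_prod_primesBelow_one_add_inv_mul_add_one :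
    Tendsto (fun n : ℕ ↦ ((∏ p ∈ n.primesBelow, (1 + ((p : ℝ) * (p + 1))⁻¹) : ℝ) : ℂ)) atTop
      (𝓝 (riemannZeta 2 / riemannZeta 3)) := by
  refine ((riemannZeta_eulerProduct (by norm_num)).div (riemannZeta_eulerProduct (by norm_num))
    (riemannZeta_ne_zero_of_one_le_re (by norm_num))).congr fun n ↦ ?_
  rw [Pi.div_apply, ← Finset.prod_div_distrib, Complex.ofReal_prod]
  refine Finset.prod_congr rfl fun p hp ↦ ?_
  have hp : (1 : ℝ) < p := by exact_mod_cast (Nat.prime_of_mem_primesBelow hp).one_lt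
  rw [one_add_inv_mul_add_one_eq hp]
  simp [Complex.cpow_neg]

theorem expectation_random_euler_product_neg_two_general
    {Ω : Type*} [MeasurableSpace Ω] (μ : Measure Ω) [IsProbabilityMeasure μ]
    (X : {p : ℕ // p.Prime} → Ω → ℝ)
    (hmeas : ∀ p, Measurable (X p))
    (hindep : iIndepFun X μ)
    (h1 : ∀ p : {p : ℕ // p.Prime},
      μ {ω | X p ω = 1} = ENNReal.ofReal ((p : ℕ) / (2 * ((p : ℕ) + 1)) : ℝ))
    (h0 : ∀ p : {p : ℕ // p.Prime},
      μ {ω | X p ω = 0} = ENNReal.ofReal (1 / ((p : ℕ) + 1) : ℝ))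
    (hm1 : ∀ p : {p : ℕ // p.Prime},
      μ {ω | X p ω = -1} = ENNReal.ofReal ((p : ℕ) / (2 * ((p : ℕ) + 1)) : ℝ))
    (L : Ω → ℝ)
    (hlim : ∀ᵐ ω ∂μ, Tendsto (fun n : ℕ => ∏ p ∈ Finset.range n,
        if hp : p.Prime then (1 - X ⟨p, hp⟩ ω / p)⁻¹ else 1)
      atTop (nhds (L ω))) :
    ((∫ ω, (L ω) ^ (-2 : ℤ) ∂μ : ℝ) : ℂ) = riemannZeta 2 / riemannZeta 3 := by
  have hlaw : ∀ p, HasThreePointLaw μ (X p) ((p : ℕ) : ℝ) := fun p ↦ ⟨h1 p, h0 p, hm1 p⟩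
  have hp : ∀ p : {p : ℕ // p.Prime}, (1 : ℝ) < (p : ℕ) := fun p ↦ by exact_mod_cast p.2.one_lt
  obtain ⟨A, hA, hprod⟩ :=
    exists_ofReal_eq_of_tendsto tendsto_prod_primesBelow_one_add_inv_mul_add_one
  rw [← hA, integral_zpow_neg_two_eq_of_tendsto_prod_inv (g := fun p ω ↦ 1 - X p ω / (p : ℕ))
    (S := fun n ↦ (Finset.range n).subtype Nat.Prime)
    (hindep.comp _ fun p ↦ measurable_const.sub (measurable_id.div_const _))
    (fun p ↦ measurable_const.sub ((hmeas p).div_const _))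
    (fun p ↦ (hlaw p).memLp_top_one_sub_div (hmeas p) (hp p))
    (fun p ↦ (hlaw p).integral_one_sub_div (hmeas p) (by linarith [hp p]))
    (ae_all_iff.2 fun p ↦ ((hlaw p).ae_one_sub_div_mem_Ioo (hmeas p) (hp p)).mono
      fun _ hω ↦ hω.1.ne')
    (fun n m hnm ↦ Finset.subtype_mono (Finset.range_subset_range.2 hnm)) ?_ ?_]
  · refine hprod.congr fun n ↦ ?_
    rw [Nat.primesBelow, ← Finset.prod_subtype_eq_prod_filter]
    exact Finset.prod_congr rfl fun p _ ↦
      ((hlaw p).integral_one_sub_div_sq (hmeas p) (by linarith [hp p])).symm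
  · filter_upwards [hlim] with ω hω
    simpa only [Finset.prod_dite_eq_prod_subtype _ _ fun p ↦ (1 - X p ω / (p : ℕ))⁻¹] using hω

/-- With `(X_p)_{p prime}` independent, `X_p = 1` with probability
`p/(2(p+1))`, `0` with probability `1/(p+1)` and `-1` with probability
`p/(2(p+1))`, and `L(1,X) = ∏_p (1 - X_p/p)⁻¹` (the a.s. limit of the partial
products), one has `E[L(1,X)^{-2}] = ζ(2)/ζ(3)`. -/
theorem expectation_random_euler_product_neg_two
    {Ω : Type*} [MeasurableSpace Ω] (μ : Measure Ω) [IsProbabilityMeasure μ]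
    (X : {p : ℕ // p.Prime} → Ω → ℝ)
    (hmeas : ∀ p, Measurable (X p))
    (hindep : iIndepFun X μ)
    (h1 : ∀ p : {p : ℕ // p.Prime},
      μ {ω | X p ω = 1} = ENNReal.ofReal ((p : ℕ) / (2 * ((p : ℕ) + 1)) : ℝ))
    (h0 : ∀ p : {p : ℕ // p.Prime},
      μ {ω | X p ω = 0} = ENNReal.ofReal (1 / ((p : ℕ) + 1) : ℝ))
    (hm1 : ∀ p : {p : ℕ // p.Prime},
      μ {ω | X p ω = -1} = ENNReal.ofReal ((p : ℕ) / (2 * ((p : ℕ) + 1)) : ℝ))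
    (L : Ω → ℝ) (hL : Measurable L)
    (hlim : ∀ᵐ ω ∂μ, Tendsto (fun n : ℕ => ∏ p ∈ Finset.range n,
        if hp : p.Prime then (1 - X ⟨p, hp⟩ ω / p)⁻¹ else 1)
      atTop (nhds (L ω))) :
    ((∫ ω, (L ω) ^ (-2 : ℤ) ∂μ : ℝ) : ℂ) = riemannZeta 2 / riemannZeta 3 :=
  expectation_random_euler_product_neg_two_general μ X hmeas hindep h1 h0 hm1 L hlim
end

section
/- Let L be a positive random variable and X, H > 0. Suppose there exist constants C₁ > 0 and τ > 1 such that P(L ≤ 1/τ) ≤ exp(-e^{τ - C₁}/τ) for all τ ≥ 2, and suppose X ≥ H² log log H with H large. Then E[min(π² H²/L², X)] = π² H² E[L^{-2}] + O_A(H²/(log H)^A) for any fixed A > 0. -/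
open MeasureTheory Real Filter


lemma tendsto_sqrt_atTop' : Filter.Tendsto Real.sqrt Filter.atTop Filter.atTop := by
  apply tendsto_atTop_atTop.2
  intro b
  exact ⟨max 0 b ^ 2, fun a ha => by
    calc b ≤ max 0 b := le_max_right _ _
    _ = Real.sqrt ((max 0 b)^2) := (Real.sqrt_sq (le_max_left _ _)).symm
    _ ≤ Real.sqrt a := Real.sqrt_le_sqrt ha⟩

lemma phi_mono (C₁ : ℝ) {a b : ℝ} (ha : 1 ≤ a) (hab : a ≤ b) :
    Real.exp (a - C₁) / a ≤ Real.exp (b - C₁) / b := by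
  have hb : (0:ℝ) < b := by linarith
  have ha0 : (0:ℝ) < a := by linarith
  rw [div_le_div_iff₀ ha0 hb]
  have h1 : b ≤ Real.exp (b - a) * a := by
    have := Real.add_one_le_exp (b - a)
    nlinarith [Real.exp_pos (b - a)]
  have e : a - C₁ + (b - a) = b - C₁ := by ring
  calc Real.exp (a - C₁) * b ≤ Real.exp (a - C₁) * (Real.exp (b - a) * a) := by
        exact mul_le_mul_of_nonneg_left h1 (Real.exp_pos _).le
    _ = Real.exp (b - C₁) * a := by rw [← mul_assoc, ← Real.exp_add, e]

lemma term_bound (C₁ : ℝ) : ∃ N₂ : ℕ, 2 ≤ N₂ ∧ ∀ N n : ℕ, N₂ ≤ N → N ≤ n →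
    ((n:ℝ)+1)^2 * Real.exp (-(Real.exp ((n:ℝ) - C₁)/n)) ≤
      Real.exp (-(Real.exp ((N:ℝ) - C₁)/(2*N))) * Real.exp (-(n:ℝ)) := by
  have h1 : ∀ᶠ x : ℝ in atTop, 2*x*(3*x+2) ≤ Real.exp (x - C₁) := by
    have h2 := (Real.tendsto_exp_div_pow_atTop 2).eventually_ge_atTop (8 * Real.exp C₁)
    filter_upwards [h2, eventually_ge_atTop (2:ℝ)] with x hx hx2
    have hx0 : (0:ℝ) < x := by linarith
    rw [le_div_iff₀ (by positivity)] at hx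
    have e : Real.exp (x - C₁) = Real.exp x / Real.exp C₁ := Real.exp_sub _ _
    rw [e, le_div_iff₀ (Real.exp_pos _)]
    nlinarith [Real.exp_pos C₁, mul_nonneg (mul_nonneg (by linarith : (0:ℝ) ≤ x - 2) hx0.le) (Real.exp_pos C₁).le]
  have h1' : ∀ᶠ m : ℕ in atTop, 2*(m:ℝ)*(3*(m:ℝ)+2) ≤ Real.exp ((m:ℝ) - C₁) :=
    tendsto_natCast_atTop_atTop.eventually h1
  obtain ⟨N₂', hN₂'⟩ := eventually_atTop.1 h1'
  refine ⟨max N₂' 2, le_max_right _ _, ?_⟩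
  intro N n hN hn
  have hN2 : (2:ℕ) ≤ N := le_trans (le_max_right _ _) hN
  have hn2 : (2:ℕ) ≤ n := le_trans hN2 hn
  have hNr : (1:ℝ) ≤ N := by exact_mod_cast le_trans (by norm_num) hN2
  have hnr : (2:ℝ) ≤ n := by exact_mod_cast hn2
  have hnN : (N:ℝ) ≤ n := by exact_mod_cast hn
  have hn0 : (0:ℝ) < n := by linarith
  have hN0 : (0:ℝ) < N := by linarith
  have hkey : ((n:ℝ)+1)^2 * Real.exp (n:ℝ) ≤ Real.exp (Real.exp ((n:ℝ) - C₁)/(2*n)) := by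
    have hpoly := hN₂' n (le_trans (le_trans (le_max_left _ _) hN) hn)
    have e1 : ((n:ℝ)+1) ≤ Real.exp ((n:ℝ)+1) := by
      linarith [Real.add_one_le_exp ((n:ℝ)+1)]
    have e2 : ((n:ℝ)+1)^2 ≤ Real.exp (2*(n:ℝ)+2) := by
      have e : Real.exp (2*(n:ℝ)+2) = Real.exp ((n:ℝ)+1) * Real.exp ((n:ℝ)+1) := by
        rw [← Real.exp_add]; ring_nf
      rw [e, sq]
      exact mul_le_mul e1 e1 (by linarith) (Real.exp_pos _).le
    have e3 : ((n:ℝ)+1)^2 * Real.exp (n:ℝ) ≤ Real.exp (3*(n:ℝ)+2) := by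
      calc ((n:ℝ)+1)^2 * Real.exp (n:ℝ) ≤ Real.exp (2*(n:ℝ)+2) * Real.exp (n:ℝ) :=
            mul_le_mul_of_nonneg_right e2 (Real.exp_pos _).le
        _ = Real.exp (3*(n:ℝ)+2) := by rw [← Real.exp_add]; ring_nf
    refine le_trans e3 (Real.exp_le_exp.2 ?_)
    rw [le_div_iff₀ (by positivity)]
    nlinarith
  have hmono : Real.exp ((N:ℝ) - C₁)/(2*N) + Real.exp ((n:ℝ) - C₁)/(2*n) ≤
      Real.exp ((n:ℝ) - C₁)/n := by
    have hp := phi_mono C₁ hNr hnN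
    have h2 : Real.exp ((N:ℝ) - C₁)/(2*N) ≤ Real.exp ((n:ℝ) - C₁)/(2*n) := by
      rw [div_le_div_iff₀ (by positivity) (by positivity)] at hp ⊢
      nlinarith
    have h3 : Real.exp ((n:ℝ) - C₁)/(2*n) + Real.exp ((n:ℝ) - C₁)/(2*n) =
        Real.exp ((n:ℝ) - C₁)/n := by field_simp; ring
    linarith
  have hfin : ((n:ℝ)+1)^2 ≤ Real.exp (Real.exp ((n:ℝ) - C₁)/(2*n)) * Real.exp (-(n:ℝ)) := by
    have h := mul_le_mul_of_nonneg_right hkey (Real.exp_pos (-(n:ℝ))).le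
    have e : ((n:ℝ)+1)^2 * Real.exp (n:ℝ) * Real.exp (-(n:ℝ)) = ((n:ℝ)+1)^2 := by
      rw [mul_assoc, ← Real.exp_add]; simp
    rwa [e] at h
  have hlast : ((n:ℝ)+1)^2 * Real.exp (-(Real.exp ((n:ℝ)-C₁)/(2*n))) ≤ Real.exp (-(n:ℝ)) := by
    have h := mul_le_mul_of_nonneg_right hfin
      (Real.exp_pos (-(Real.exp ((n:ℝ)-C₁)/(2*n)))).le
    have e : Real.exp (Real.exp ((n:ℝ)-C₁)/(2*n)) * Real.exp (-(n:ℝ)) *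
        Real.exp (-(Real.exp ((n:ℝ)-C₁)/(2*n))) = Real.exp (-(n:ℝ)) := by
      rw [mul_comm (Real.exp (Real.exp ((n:ℝ)-C₁)/(2*n))) (Real.exp (-(n:ℝ))), mul_assoc,
        ← Real.exp_add]
      simp
    rwa [e] at h
  calc ((n:ℝ)+1)^2 * Real.exp (-(Real.exp ((n:ℝ)-C₁)/n))
      ≤ ((n:ℝ)+1)^2 * (Real.exp (-(Real.exp ((N:ℝ)-C₁)/(2*N))) *
          Real.exp (-(Real.exp ((n:ℝ)-C₁)/(2*n)))) := by
        rw [← Real.exp_add]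
        exact mul_le_mul_of_nonneg_left (Real.exp_le_exp.2 (by linarith)) (by positivity)
    _ = Real.exp (-(Real.exp ((N:ℝ)-C₁)/(2*N))) *
          (((n:ℝ)+1)^2 * Real.exp (-(Real.exp ((n:ℝ)-C₁)/(2*n)))) := by ring
    _ ≤ Real.exp (-(Real.exp ((N:ℝ)-C₁)/(2*N))) * Real.exp (-(n:ℝ)) :=
        mul_le_mul_of_nonneg_left hlast (Real.exp_pos _).le

lemma shell_bound {Ω : Type} [MeasurableSpace Ω] (μ : Measure Ω) [IsProbabilityMeasure μ]
    (L : Ω → ℝ) (hL : Measurable L) (hLpos : ∀ ω, 0 < L ω) (C₁ : ℝ)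
    (htail : ∀ τ : ℝ, 2 ≤ τ →
      μ {ω | L ω ≤ 1 / τ} ≤ ENNReal.ofReal (Real.exp (-(Real.exp (τ - C₁) / τ))))
    (N₂ : ℕ) (hN₂2 : 2 ≤ N₂)
    (hterm : ∀ N n : ℕ, N₂ ≤ N → N ≤ n →
      ((n:ℝ)+1)^2 * Real.exp (-(Real.exp ((n:ℝ) - C₁)/n)) ≤
        Real.exp (-(Real.exp ((N:ℝ) - C₁)/(2*N))) * Real.exp (-(n:ℝ)))
    (N : ℕ) (hN : N₂ ≤ N) :
    ∫⁻ ω in {ω | L ω ≤ 1/(N:ℝ)}, ENNReal.ofReal (((L ω)^2)⁻¹) ∂μ ≤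
      ENNReal.ofReal (2 * Real.exp (-(Real.exp ((N:ℝ) - C₁)/(2*N)))) := by
  set B := Real.exp (-(Real.exp ((N:ℝ) - C₁)/(2*(N:ℝ)))) with hB
  have hBpos : 0 < B := Real.exp_pos _
  have hN2 : 2 ≤ N := le_trans hN₂2 hN
  have hNr : (2:ℝ) ≤ (N:ℝ) := by exact_mod_cast hN2
  set A : ℕ → Set Ω := fun k =>
    {ω | 1/((N+k+1 : ℕ):ℝ) < L ω} ∩ {ω | L ω ≤ 1/((N+k : ℕ):ℝ)} with hA
  have hAm : ∀ k, MeasurableSet (A k) := fun k =>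
    (measurableSet_lt measurable_const hL).inter (measurableSet_le hL measurable_const)
  have hdisj : Pairwise (Function.onFun Disjoint A) := by
    have key : ∀ i j : ℕ, i < j → Disjoint (A i) (A j) := by
      intro i j hij
      rw [Set.disjoint_left]
      rintro ω ⟨hlow, _⟩ ⟨_, hup⟩
      have h1 : ((N+i+1 : ℕ):ℝ) ≤ ((N+j : ℕ):ℝ) := by exact_mod_cast by omega
      have h2 : (0:ℝ) < ((N+i+1 : ℕ):ℝ) := by positivity
      have : 1/((N+j : ℕ):ℝ) ≤ 1/((N+i+1 : ℕ):ℝ) := one_div_le_one_div_of_le h2 h1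
      simp only [Set.mem_setOf_eq] at hlow hup
      linarith
    intro i j hij
    rcases hij.lt_or_gt with h | h
    · exact key i j h
    · exact (key j i h).symm
  have hunion : {ω | L ω ≤ 1/(N:ℝ)} = ⋃ k, A k := by
    ext ω
    simp only [Set.mem_setOf_eq, Set.mem_iUnion, hA, Set.mem_inter_iff]
    constructor
    · intro hω
      have hx := hLpos ω
      set x := L ω
      have hN0 : (0:ℝ) < (N:ℝ) := by linarith
      set n := ⌊1/x⌋₊ with hn
      have hinv : (0:ℝ) ≤ 1/x := by positivity
      have hfl : (n:ℝ) ≤ 1/x := Nat.floor_le hinv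
      have hfl2 : 1/x < (n:ℝ)+1 := Nat.lt_floor_add_one _
      have hNx : (N:ℝ)*x ≤ 1 := by
        rw [le_div_iff₀ hN0] at hω; linarith
      have hNn : N ≤ n := by
        apply Nat.le_floor
        rw [le_div_iff₀ hx]; linarith
      have hn0 : (0:ℝ) < (n:ℝ) := by
        have : (N:ℝ) ≤ (n:ℝ) := by exact_mod_cast hNn
        linarith
      refine ⟨n - N, ?_, ?_⟩
      · have hk : N + (n - N) + 1 = n + 1 := by omega
        rw [hk]
        push_cast
        rw [div_lt_iff₀ hx] at hfl2
        rw [div_lt_iff₀ (by linarith : (0:ℝ) < (n:ℝ)+1)]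
        linarith
      · have hk : N + (n - N) = n := by omega
        rw [hk]
        rw [le_div_iff₀ hx] at hfl
        rw [le_div_iff₀ hn0]
        linarith
    · rintro ⟨k, _, hup⟩
      have h1 : ((N : ℕ):ℝ) ≤ ((N+k : ℕ):ℝ) := by exact_mod_cast by omega
      have h2 : (0:ℝ) < ((N : ℕ):ℝ) := by linarith
      calc L ω ≤ 1/((N+k : ℕ):ℝ) := hup
        _ ≤ 1/(N:ℝ) := one_div_le_one_div_of_le h2 h1
  rw [hunion, lintegral_iUnion hAm hdisj]
  -- per-shell bound
  have hshell : ∀ k : ℕ, ∫⁻ ω in A k, ENNReal.ofReal (((L ω)^2)⁻¹) ∂μ ≤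
      ENNReal.ofReal ((B * Real.exp (-(N:ℝ))) * (Real.exp (-1))^k) := by
    intro k
    set m := N + k with hm
    have hmN : (N:ℝ) ≤ (m:ℝ) := by exact_mod_cast by omega
    have hm0 : (0:ℝ) < (m:ℝ) := by linarith
    have step1 : ∫⁻ ω in A k, ENNReal.ofReal (((L ω)^2)⁻¹) ∂μ ≤
        ENNReal.ofReal (((m:ℝ)+1)^2) * μ (A k) := by
      rw [← setLIntegral_const (A k) (ENNReal.ofReal (((m:ℝ)+1)^2))]
      apply setLIntegral_mono measurable_const
      intro ω hω
      obtain ⟨hlow, _⟩ := hω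
      simp only [Set.mem_setOf_eq] at hlow
      apply ENNReal.ofReal_le_ofReal
      have hx := hLpos ω
      have hc : ((m+1:ℕ):ℝ) = (m:ℝ)+1 := by push_cast; ring
      rw [hc] at hlow
      have h1 : 1 ≤ L ω * ((m:ℝ)+1) := by
        rw [div_lt_iff₀ (by linarith : (0:ℝ) < (m:ℝ)+1)] at hlow
        linarith
      rw [inv_eq_one_div, div_le_iff₀ (by positivity : (0:ℝ) < (L ω)^2)]
      nlinarith [sq_nonneg (L ω * ((m:ℝ)+1) - 1)]
    have step2 : μ (A k) ≤ ENNReal.ofReal (Real.exp (-(Real.exp ((m:ℝ) - C₁)/(m:ℝ)))) := by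
      refine le_trans (measure_mono ?_) (htail (m:ℝ) (by linarith))
      rintro ω ⟨_, hup⟩
      exact hup
    calc ∫⁻ ω in A k, ENNReal.ofReal (((L ω)^2)⁻¹) ∂μ
        ≤ ENNReal.ofReal (((m:ℝ)+1)^2) * ENNReal.ofReal (Real.exp (-(Real.exp ((m:ℝ) - C₁)/(m:ℝ)))) :=
          le_trans step1 (mul_le_mul_right step2 _)
      _ = ENNReal.ofReal (((m:ℝ)+1)^2 * Real.exp (-(Real.exp ((m:ℝ) - C₁)/(m:ℝ)))) :=
          (ENNReal.ofReal_mul (by positivity)).symm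
      _ ≤ ENNReal.ofReal ((B * Real.exp (-(N:ℝ))) * (Real.exp (-1))^k) := by
          apply ENNReal.ofReal_le_ofReal
          have ht := hterm N m hN (by omega)
          have he : Real.exp (-(m:ℝ)) = Real.exp (-(N:ℝ)) * (Real.exp (-1))^k := by
            rw [← Real.exp_nat_mul, ← Real.exp_add]
            congr 1
            push_cast [hm]
            ring
          rw [he] at ht
          calc ((m:ℝ)+1)^2 * Real.exp (-(Real.exp ((m:ℝ) - C₁)/(m:ℝ))) ≤
              B * (Real.exp (-(N:ℝ)) * (Real.exp (-1))^k) := ht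
            _ = (B * Real.exp (-(N:ℝ))) * (Real.exp (-1))^k := by ring
  calc ∑' k, ∫⁻ ω in A k, ENNReal.ofReal (((L ω)^2)⁻¹) ∂μ
      ≤ ∑' k, ENNReal.ofReal ((B * Real.exp (-(N:ℝ))) * (Real.exp (-1))^k) :=
        ENNReal.tsum_le_tsum hshell
    _ = ∑' k, ENNReal.ofReal (B * Real.exp (-(N:ℝ))) * (ENNReal.ofReal (Real.exp (-1)))^k := by
        congr 1; ext k
        rw [ENNReal.ofReal_mul (by positivity), ENNReal.ofReal_pow (Real.exp_pos _).le]
    _ = ENNReal.ofReal (B * Real.exp (-(N:ℝ))) * (1 - ENNReal.ofReal (Real.exp (-1)))⁻¹ := by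
        rw [ENNReal.tsum_mul_left, ENNReal.tsum_geometric]
    _ ≤ ENNReal.ofReal (B * Real.exp (-(N:ℝ))) * 2 := by
        apply mul_le_mul_right
        have h1 : Real.exp (-1:ℝ) ≤ 1/2 := by
          have h2 : (2:ℝ) ≤ Real.exp 1 := by
            have := Real.exp_one_gt_d9; linarith
          rw [Real.exp_neg]
          rw [inv_le_comm₀ (Real.exp_pos 1) (by norm_num)] at *
          linarith [Real.exp_pos 1]
        have h2 : ENNReal.ofReal (Real.exp (-1:ℝ)) ≤ 2⁻¹ := by
          calc ENNReal.ofReal (Real.exp (-1:ℝ)) ≤ ENNReal.ofReal (1/2) :=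
                ENNReal.ofReal_le_ofReal h1
            _ = 2⁻¹ := by rw [one_div, ENNReal.ofReal_inv_of_pos two_pos, ENNReal.ofReal_ofNat]
        have h3 : (2:ENNReal)⁻¹ ≤ 1 - ENNReal.ofReal (Real.exp (-1:ℝ)) := by
          calc (2:ENNReal)⁻¹ = 1 - 2⁻¹ := ENNReal.one_sub_inv_two.symm
            _ ≤ 1 - ENNReal.ofReal (Real.exp (-1:ℝ)) := tsub_le_tsub_left h2 1
        calc (1 - ENNReal.ofReal (Real.exp (-1:ℝ)))⁻¹ ≤ ((2:ENNReal)⁻¹)⁻¹ :=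
              ENNReal.inv_le_inv' h3
          _ = 2 := by simp
    _ ≤ ENNReal.ofReal (2 * B) := by
        rw [show ((2:ENNReal) = ENNReal.ofReal 2) by norm_num,
          ← ENNReal.ofReal_mul (by positivity)]
        apply ENNReal.ofReal_le_ofReal
        have : Real.exp (-(N:ℝ)) ≤ 1 := Real.exp_le_one_iff.2 (by linarith)
        nlinarith

lemma integrable_q {Ω : Type} [MeasurableSpace Ω] (μ : Measure Ω) [IsProbabilityMeasure μ]
    (L : Ω → ℝ) (hL : Measurable L) (hLpos : ∀ ω, 0 < L ω)
    (N₂ : ℕ) (hN₂2 : 2 ≤ N₂) (Bnd : ℝ)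
    (hbnd : ∫⁻ ω in {ω | L ω ≤ 1/(N₂:ℝ)}, ENNReal.ofReal (((L ω)^2)⁻¹) ∂μ ≤
      ENNReal.ofReal Bnd) :
    Integrable (fun ω => ((L ω)^2)⁻¹) μ := by
  have hqm : Measurable (fun ω => ((L ω)^2)⁻¹) := (hL.pow_const 2).inv
  refine ⟨hqm.aestronglyMeasurable, ?_⟩
  rw [hasFiniteIntegral_iff_norm]
  have hS : MeasurableSet {ω | L ω ≤ 1/(N₂:ℝ)} := measurableSet_le hL measurable_const
  have heq : ∀ ω, ENNReal.ofReal ‖((L ω)^2)⁻¹‖ = ENNReal.ofReal (((L ω)^2)⁻¹) := by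
    intro ω
    rw [Real.norm_eq_abs, abs_of_nonneg (by positivity)]
  simp_rw [heq]
  rw [← lintegral_add_compl (fun ω => ENNReal.ofReal (((L ω)^2)⁻¹)) hS]
  have hcompl : ∫⁻ ω in {ω | L ω ≤ 1/(N₂:ℝ)}ᶜ, ENNReal.ofReal (((L ω)^2)⁻¹) ∂μ ≤
      ENNReal.ofReal ((N₂:ℝ)^2) := by
    have hN₂r : (0:ℝ) < (N₂:ℝ) := by exact_mod_cast by omega
    calc ∫⁻ ω in {ω | L ω ≤ 1/(N₂:ℝ)}ᶜ, ENNReal.ofReal (((L ω)^2)⁻¹) ∂μ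
        ≤ ∫⁻ _ in {ω | L ω ≤ 1/(N₂:ℝ)}ᶜ, ENNReal.ofReal ((N₂:ℝ)^2) ∂μ := by
          apply setLIntegral_mono measurable_const
          intro ω hω
          simp only [Set.mem_compl_iff, Set.mem_setOf_eq, not_le] at hω
          apply ENNReal.ofReal_le_ofReal
          have hx := hLpos ω
          have h1 : 1 ≤ L ω * (N₂:ℝ) := by
            rw [div_lt_iff₀ hN₂r] at hω; linarith
          rw [inv_eq_one_div, div_le_iff₀ (by positivity : (0:ℝ) < (L ω)^2)]
          nlinarith [sq_nonneg (L ω * (N₂:ℝ) - 1)]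
      _ = ENNReal.ofReal ((N₂:ℝ)^2) * μ {ω | L ω ≤ 1/(N₂:ℝ)}ᶜ := setLIntegral_const _ _
      _ ≤ ENNReal.ofReal ((N₂:ℝ)^2) * 1 := mul_le_mul_right prob_le_one _
      _ = ENNReal.ofReal ((N₂:ℝ)^2) := mul_one _
  exact lt_of_le_of_lt (add_le_add hbnd hcompl)
    (ENNReal.add_lt_top.2 ⟨ENNReal.ofReal_lt_top, ENNReal.ofReal_lt_top⟩)

lemma s_cond (A C₁ : ℝ) (hA : 0 < A) (N₂ : ℕ) (hN₂ : 2 ≤ N₂) :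
    ∀ᶠ s : ℝ in atTop, N₂ ≤ ⌊s/π⌋₊ ∧
      A * s^2 ≤ Real.exp ((⌊s/π⌋₊:ℝ) - C₁) / (2*(⌊s/π⌋₊:ℝ)) := by
  have hexp : ∀ᶠ s : ℝ in atTop, A * Real.exp C₁ * s^3 ≤ Real.exp (s/4) := by
    have h4 : Tendsto (fun s:ℝ => s/4) atTop atTop :=
      Tendsto.atTop_div_const (by norm_num) tendsto_id
    have h1 := (Real.tendsto_exp_div_pow_atTop 3).eventually_ge_atTop (64 * A * Real.exp C₁)
    filter_upwards [h4.eventually h1, eventually_ge_atTop (1:ℝ)] with s hs hs1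
    have hs0 : (0:ℝ) < s := by linarith
    rw [le_div_iff₀ (by positivity)] at hs
    calc A * Real.exp C₁ * s^3 = 64 * A * Real.exp C₁ * (s/4)^3 := by ring
      _ ≤ Real.exp (s/4) := hs
  filter_upwards [hexp, eventually_ge_atTop (15:ℝ), eventually_ge_atTop (π*((N₂:ℝ)+1))]
    with s hse hs15 hsN
  have hs0 : (0:ℝ) < s := by linarith
  have hπ : (0:ℝ) < π := Real.pi_pos
  set N := ⌊s/π⌋₊ with hNdef
  have hNle : (N:ℝ) ≤ s/π := Nat.floor_le (by positivity)
  have hNgt : s/π < (N:ℝ) + 1 := Nat.lt_floor_add_one _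
  have hN₂N : N₂ ≤ N := by
    apply Nat.le_floor
    rw [le_div_iff₀ hπ]
    nlinarith
  refine ⟨hN₂N, ?_⟩
  have hNr2 : (2:ℝ) ≤ (N:ℝ) := by exact_mod_cast le_trans hN₂ hN₂N
  have hs4 : s/4 ≤ (N:ℝ) := by
    have hpi : π < 3.15 := Real.pi_lt_d2
    have h2 : s/4 + 1 ≤ s/π := by
      rw [div_add' _ _ _ (by norm_num), div_le_div_iff₀ (by norm_num) hπ]
      nlinarith
    linarith
  have hNπ : (N:ℝ)*π ≤ s := (le_div_iff₀ hπ).1 hNle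
  have h2N : 2*(N:ℝ) ≤ s := by nlinarith [Real.pi_gt_three]
  have hnum : A * s^3 ≤ Real.exp ((N:ℝ) - C₁) := by
    have h1 : Real.exp (s/4 - C₁) ≤ Real.exp ((N:ℝ) - C₁) := Real.exp_le_exp.2 (by linarith)
    have h2 : A * s^3 ≤ Real.exp (s/4 - C₁) := by
      rw [Real.exp_sub, le_div_iff₀ (Real.exp_pos _)]
      calc A * s^3 * Real.exp C₁ = A * Real.exp C₁ * s^3 := by ring
        _ ≤ Real.exp (s/4) := hse
    linarith
  have hdiv := div_le_div₀ (Real.exp_pos ((N:ℝ) - C₁)).le hnum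
    (by positivity : (0:ℝ) < 2*(N:ℝ)) h2N
  calc A * s^2 = A * s^3 / s := by field_simp
    _ ≤ Real.exp ((N:ℝ) - C₁) / (2*(N:ℝ)) := hdiv


/-- Let `L` be a positive random variable whose lower tail satisfies
`P(L ≤ 1/τ) ≤ exp(-e^{τ-C₁}/τ)` for all `τ ≥ 2`. If `X ≥ H² log log H` and
`H` is large, then `E[min(π²H²/L², X)] = π²H² E[L⁻²] + O(H²/(log H)^A)` for
any fixed `A > 0`, the implied constant depending on `A` and `C₁`. -/
theorem expectation_min_truncation (A C₁ : ℝ) (hA : 0 < A) (hC₁ : 0 < C₁) :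
    ∃ C > 0, ∃ H₀ : ℝ, ∀ {Ω : Type} [MeasurableSpace Ω]
      (μ : Measure Ω) [IsProbabilityMeasure μ] (L : Ω → ℝ),
      Measurable L → (∀ ω, 0 < L ω) →
      (∀ τ : ℝ, 2 ≤ τ →
        μ {ω | L ω ≤ 1 / τ} ≤ ENNReal.ofReal (Real.exp (-(Real.exp (τ - C₁) / τ)))) →
      ∀ H X : ℝ, H₀ ≤ H → H ^ 2 * Real.log (Real.log H) ≤ X →
      |(∫ ω, min (π ^ 2 * H ^ 2 / (L ω) ^ 2) X ∂μ)
          - π ^ 2 * H ^ 2 * ∫ ω, (L ω) ^ (-2 : ℤ) ∂μ|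
        ≤ C * H ^ 2 / (Real.log H) ^ A := by
  obtain ⟨N₂, hN₂2, hterm⟩ := term_bound C₁
  have hu : Tendsto (fun H:ℝ => Real.log (Real.log H)) atTop atTop :=
    tendsto_log_atTop.comp tendsto_log_atTop
  have hsT : Tendsto (fun H:ℝ => Real.sqrt (Real.log (Real.log H))) atTop atTop :=
    tendsto_sqrt_atTop'.comp hu
  have hev : ∀ᶠ H : ℝ in atTop,
      (N₂ ≤ ⌊Real.sqrt (Real.log (Real.log H))/π⌋₊ ∧
        A * (Real.sqrt (Real.log (Real.log H)))^2 ≤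
          Real.exp ((⌊Real.sqrt (Real.log (Real.log H))/π⌋₊:ℝ) - C₁) /
            (2*(⌊Real.sqrt (Real.log (Real.log H))/π⌋₊:ℝ))) ∧
      1 ≤ Real.log (Real.log H) ∧ 1 ≤ Real.log H ∧ 1 ≤ H :=
    ((hsT.eventually (s_cond A C₁ hA N₂ hN₂2)).and
      ((hu.eventually_ge_atTop 1).and ((tendsto_log_atTop.eventually_ge_atTop 1).and
        (eventually_ge_atTop 1))))
  obtain ⟨H₀, hH₀⟩ := eventually_atTop.1 hev
  refine ⟨2*π^2, by positivity, H₀, ?_⟩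
  intro Ω _ μ _ L hL hLpos htail H X hH hX
  obtain ⟨⟨hNN₂, hAs⟩, hu1, hlog1, hH1⟩ := hH₀ H hH
  set u := Real.log (Real.log H) with hudef
  set s := Real.sqrt u with hsdef
  set N := ⌊s/π⌋₊ with hNdef
  have hH0 : (0:ℝ) < H := lt_of_lt_of_le one_pos hH1
  have hs2 : s^2 = u := Real.sq_sqrt (by linarith)
  have hNr2 : (2:ℝ) ≤ (N:ℝ) := by exact_mod_cast le_trans hN₂2 hNN₂
  have hN0 : (0:ℝ) < (N:ℝ) := by linarith
  have hs0 : (0:ℝ) < s := Real.sqrt_pos.2 (by linarith)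
  have hπ : (0:ℝ) < π := Real.pi_pos
  have hXpos : (0:ℝ) < X := lt_of_lt_of_le (mul_pos (pow_pos hH0 2) (by linarith)) hX
  -- shell bounds
  have hshell := shell_bound μ L hL hLpos C₁ htail N₂ hN₂2 hterm N hNN₂
  have hshell₂ := shell_bound μ L hL hLpos C₁ htail N₂ hN₂2 hterm N₂ (le_refl N₂)
  have hqi : Integrable (fun ω => ((L ω)^2)⁻¹) μ :=
    integrable_q μ L hL hLpos N₂ hN₂2 _ hshell₂
  set B := Real.exp (-(Real.exp ((N:ℝ) - C₁)/(2*(N:ℝ)))) with hBdef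
  have hBpos : 0 < B := Real.exp_pos _
  set q : Ω → ℝ := fun ω => ((L ω)^2)⁻¹ with hqdef
  have hqm : Measurable q := (hL.pow_const 2).inv
  have hq0 : ∀ ω, 0 ≤ q ω := fun ω => by
    have := hLpos ω; positivity
  have hdivq : ∀ ω, π^2*H^2/(L ω)^2 = π^2*H^2 * q ω := fun ω => div_eq_mul_inv _ _
  have hzq : ∀ ω, (L ω)^(-2:ℤ) = q ω := fun ω => by
    rw [hqdef, zpow_neg]
    norm_cast
  simp only [hdivq, hzq]
  have hhi : Integrable (fun ω => π^2*H^2 * q ω) μ := hqi.const_mul _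
  have hfi : Integrable (fun ω => min (π^2*H^2 * q ω) X) μ := by
    apply hhi.mono (((hqm.const_mul _).min measurable_const).aestronglyMeasurable)
    filter_upwards with ω
    rw [Real.norm_eq_abs, Real.norm_eq_abs,
      abs_of_nonneg (le_min (by have := hq0 ω; positivity) hXpos.le),
      abs_of_nonneg (by have := hq0 ω; positivity)]
    exact min_le_left _ _
  have hle : ∫ ω, min (π^2*H^2*q ω) X ∂μ ≤ ∫ ω, π^2*H^2*q ω ∂μ :=
    integral_mono hfi hhi (fun ω => min_le_left _ _)
  have hmulint : ∫ ω, π^2*H^2*q ω ∂μ = π^2*H^2 * ∫ ω, q ω ∂μ := integral_const_mul _ _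
  rw [← hmulint, abs_of_nonpos (by linarith), neg_sub, ← integral_sub hhi hfi]
  -- bad set
  set bad : Set Ω := {ω | L ω ≤ 1/(N:ℝ)} with hbaddef
  have hbadm : MeasurableSet bad := measurableSet_le hL measurable_const
  have key : ∀ ω, X < π^2*H^2 * q ω → ω ∈ bad := by
    intro ω hlt
    have hx := hLpos ω
    set x := L ω with hxdef
    have hxx : X < π^2*H^2/x^2 := by rw [hdivq ω]; exact hlt
    rw [lt_div_iff₀ (by positivity)] at hxx
    have hsq : x^2 < π^2*H^2/X := by rw [lt_div_iff₀ hXpos]; linarith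
    set c := π*H/Real.sqrt X with hcdef
    have hc0 : 0 ≤ c := by positivity
    have hc2 : c^2 = π^2*H^2/X := by
      rw [hcdef, div_pow, Real.sq_sqrt hXpos.le]; ring_nf
    have hxc : x < c := by
      apply lt_of_pow_lt_pow_left₀ 2 hc0
      rw [hc2]; exact hsq
    have hsqX : H*s ≤ Real.sqrt X := by
      have h1 : Real.sqrt (H^2*u) ≤ Real.sqrt X := Real.sqrt_le_sqrt hX
      rwa [Real.sqrt_mul (sq_nonneg H), Real.sqrt_sq hH0.le] at h1
    have hcc : c ≤ π/s := by
      have h2 : π*H/Real.sqrt X ≤ π*H/(H*s) := by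
        rw [div_le_div_iff₀ (Real.sqrt_pos.2 hXpos) (by positivity)]
        exact mul_le_mul_of_nonneg_left hsqX (by positivity)
      have h3 : π*H/(H*s) = π/s := by
        rw [mul_comm π H, mul_div_mul_left _ _ (ne_of_gt hH0)]
      rw [hcdef]; linarith [h2, h3.le]
    have hNs : π/s ≤ 1/(N:ℝ) := by
      rw [div_le_div_iff₀ hs0 hN0]
      have : (N:ℝ) ≤ s/π := Nat.floor_le (by positivity)
      rw [le_div_iff₀ hπ] at this
      nlinarith
    show x ≤ 1/(N:ℝ)
    linarith
  have hptwise : ∀ ω, (π^2*H^2*q ω) - min (π^2*H^2*q ω) X ≤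
      bad.indicator (fun ω => π^2*H^2*q ω) ω := by
    intro ω
    by_cases hc : π^2*H^2*q ω ≤ X
    · have h0 : π^2*H^2*q ω - min (π^2*H^2*q ω) X = 0 := by rw [min_eq_left hc]; ring
      rw [h0]
      exact Set.indicator_nonneg (fun ω _ => by have := hq0 ω; positivity) ω
    · push_neg at hc
      rw [Set.indicator_of_mem (key ω hc)]
      have h1 : 0 ≤ min (π^2*H^2*q ω) X := le_min (by have := hq0 ω; positivity) hXpos.le
      linarith
  have hindint : Integrable (bad.indicator fun ω => π^2*H^2*q ω) μ := hhi.indicator hbadm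
  have step1 : ∫ ω, ((π^2*H^2*q ω) - min (π^2*H^2*q ω) X) ∂μ ≤
      ∫ ω, bad.indicator (fun ω => π^2*H^2*q ω) ω ∂μ :=
    integral_mono (hhi.sub hfi) hindint hptwise
  have step2 : ∫ ω, bad.indicator (fun ω => π^2*H^2*q ω) ω ∂μ = π^2*H^2 * ∫ ω in bad, q ω ∂μ := by
    rw [integral_indicator hbadm]
    exact integral_const_mul _ _
  have step3 : ∫ ω in bad, q ω ∂μ ≤ 2*B := by
    have he : ∫ ω in bad, q ω ∂μ = (∫⁻ ω in bad, ENNReal.ofReal (q ω) ∂μ).toReal :=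
      integral_eq_lintegral_of_nonneg_ae (Filter.Eventually.of_forall hq0)
        hqm.aestronglyMeasurable
    rw [he]
    calc (∫⁻ ω in bad, ENNReal.ofReal (q ω) ∂μ).toReal
        ≤ (ENNReal.ofReal (2*B)).toReal := ENNReal.toReal_mono ENNReal.ofReal_ne_top hshell
      _ = 2*B := ENNReal.toReal_ofReal (by positivity)
  have hB2 : B ≤ ((Real.log H)^A)⁻¹ := by
    have h1 : A*u ≤ Real.exp ((N:ℝ)-C₁)/(2*(N:ℝ)) := by rw [← hs2]; exact hAs
    have hlogpos : (0:ℝ) < Real.log H := by linarith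
    have h2 : B ≤ Real.exp (-(A*u)) := Real.exp_le_exp.2 (by linarith)
    have h3 : Real.exp (-(A*u)) = ((Real.log H)^A)⁻¹ := by
      rw [Real.rpow_def_of_pos hlogpos, ← Real.exp_neg]
      congr 1; ring
    linarith [h3 ▸ h2]
  calc ∫ ω, ((π^2*H^2*q ω) - min (π^2*H^2*q ω) X) ∂μ
      ≤ π^2*H^2 * ∫ ω in bad, q ω ∂μ := by rw [← step2]; exact step1
    _ ≤ π^2*H^2 * (2*B) := mul_le_mul_of_nonneg_left step3 (by positivity)
    _ ≤ π^2*H^2 * (2*((Real.log H)^A)⁻¹) :=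
        mul_le_mul_of_nonneg_left (by linarith [hB2]) (by positivity)
    _ = 2*π^2 * H^2 / (Real.log H)^A := by rw [div_eq_mul_inv]; ring
end
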